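/- arXiv:1504.08101 — 17 statements merged into one kernel-verified Lean document; each statement's English description precedes it below -/
import Mathlib

section
/- Let n be an integer with n > 1 and let a be an integer with 1 ≤ a < n. Let E_{n,a} be the PLS consisting of the triples (1, i, i) for 1 ≤ i ≤ a together with the triples (i, n, i) for a < i ≤ n (so E_{n,a} has size n and uses n distinct symbols). Then E_{n,a} cannot be embedded into any quasigroup of order n; in particular it cannot be embedded into any group of order n. -/
/-- A partial latin square: a nonempty finite set of (row, column, symbol) triples
such that no two distinct triples agree in more than one coordinate. -/
def IsPLS (P : Finset (ℕ × ℕ × ℕ)) : Prop :=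
  P.Nonempty ∧ ∀ t₁ ∈ P, ∀ t₂ ∈ P, t₁ ≠ t₂ →
    ¬ ((t₁.1 = t₂.1 ∧ t₁.2.1 = t₂.2.1) ∨
       (t₁.1 = t₂.1 ∧ t₁.2.2 = t₂.2.2) ∨
       (t₁.2.1 = t₂.2.1 ∧ t₁.2.2 = t₂.2.2))

/-- The set of rows occurring in `P`. -/
def rowsOf (P : Finset (ℕ × ℕ × ℕ)) : Set ℕ := {r | ∃ t ∈ P, (t : ℕ × ℕ × ℕ).1 = r}

/-- The set of columns occurring in `P`. -/
def colsOf (P : Finset (ℕ × ℕ × ℕ)) : Set ℕ := {c | ∃ t ∈ P, (t : ℕ × ℕ × ℕ).2.1 = c}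

/-- The set of symbols occurring in `P`. -/
def symsOf (P : Finset (ℕ × ℕ × ℕ)) : Set ℕ := {s | ∃ t ∈ P, (t : ℕ × ℕ × ℕ).2.2 = s}

/-- `P` embeds in the group `G`: there are injections of the rows, columns and symbols
of `P` into `G` sending each triple to a correct multiplication. -/
def EmbedsIn (P : Finset (ℕ × ℕ × ℕ)) (G : Type*) [Group G] : Prop :=
  ∃ I₁ I₂ I₃ : ℕ → G,
    Set.InjOn I₁ (rowsOf P) ∧ Set.InjOn I₂ (colsOf P) ∧ Set.InjOn I₃ (symsOf P) ∧
    ∀ t ∈ P, I₁ t.1 * I₂ t.2.1 = I₃ t.2.2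

/-- `P` embeds via the binary operation `f` (e.g. a quasigroup operation). -/
def EmbedsVia (P : Finset (ℕ × ℕ × ℕ)) {Q : Type*} (f : Q → Q → Q) : Prop :=
  ∃ I₁ I₂ I₃ : ℕ → Q,
    Set.InjOn I₁ (rowsOf P) ∧ Set.InjOn I₂ (colsOf P) ∧ Set.InjOn I₃ (symsOf P) ∧
    ∀ t ∈ P, f (I₁ t.1) (I₂ t.2.1) = I₃ t.2.2

/-- The PLS `E_{n,a}`: triples (1,i,i) for 1 ≤ i ≤ a and (i,n,i) for a < i ≤ n. -/
def EvansPLS (n a : ℕ) : Finset (ℕ × ℕ × ℕ) :=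
  ((Finset.Icc 1 a).image fun i => (1, i, i)) ∪
    ((Finset.Ioc a n).image fun i => (i, n, i))

theorem evans_not_embeddable (n a : ℕ) (hn : 1 < n) (ha : 1 ≤ a) (han : a < n) :
    (∀ (Q : Type) (instF : Fintype Q) (f : Q → Q → Q),
        @Fintype.card Q instF = n →
        (∀ x y : Q, ∃! z : Q, f x z = y) →
        (∀ x y : Q, ∃! z : Q, f z x = y) →
        ¬ EmbedsVia (EvansPLS n a) f) ∧
    (∀ (G : Type) (instG : Group G) (instF : Fintype G),
        @Fintype.card G instF = n → ¬ @EmbedsIn (EvansPLS n a) G instG) := by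

  have mem1 : ∀ j, 1 ≤ j → j ≤ a → (1, j, j) ∈ EvansPLS n a := fun j h1 h2 =>
    Finset.mem_union_left _ (Finset.mem_image.2 ⟨j, Finset.mem_Icc.2 ⟨h1, h2⟩, rfl⟩)
  have mem2 : ∀ i, a < i → i ≤ n → (i, n, i) ∈ EvansPLS n a := fun i h1 h2 =>
    Finset.mem_union_right _ (Finset.mem_image.2 ⟨i, Finset.mem_Ioc.2 ⟨h1, h2⟩, rfl⟩)
  have key : ∀ (Q : Type) (instF : Fintype Q) (f : Q → Q → Q),
      @Fintype.card Q instF = n →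
      (∀ x y : Q, ∃! z : Q, f x z = y) →
      (∀ x y : Q, ∃! z : Q, f z x = y) →
      ¬ EmbedsVia (EvansPLS n a) f := by
    rintro Q instF f hcard hL hR ⟨I₁, I₂, I₃, h₁, h₂, h₃, hmul⟩
    have : DecidableEq Q := Classical.decEq Q
    -- symbols are all of Icc 1 n
    have hsyms : ↑(Finset.Icc 1 n) ⊆ symsOf (EvansPLS n a) := by
      intro j hj
      simp only [Finset.coe_Icc, Set.mem_Icc] at hj
      by_cases hja : j ≤ a
      · exact ⟨(1, j, j), mem1 j hj.1 hja, rfl⟩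
      · exact ⟨(j, n, j), mem2 j (lt_of_not_ge hja) hj.2, rfl⟩
    have hinj : Set.InjOn I₃ ↑(Finset.Icc 1 n) := h₃.mono hsyms
    have himg : ((Finset.Icc 1 n).image I₃).card = Fintype.card Q := by
      rw [Finset.card_image_of_injOn hinj, Nat.card_Icc, hcard]
      omega
    have huniv : (Finset.Icc 1 n).image I₃ = Finset.univ :=
      Finset.eq_univ_of_card _ himg
    -- find the symbol in cell (row 1, col n)
    obtain ⟨j, hjmem, hj3⟩ := Finset.mem_image.1
      (huniv ▸ Finset.mem_univ (f (I₁ 1) (I₂ n)))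
    rw [Finset.mem_Icc] at hjmem
    by_cases hja : j ≤ a
    · -- f (I₁ 1) (I₂ j) = I₃ j = f (I₁ 1) (I₂ n)
      have e1 : f (I₁ 1) (I₂ j) = I₃ j := hmul (1, j, j) (mem1 j hjmem.1 hja)
      have := (hL (I₁ 1) (I₃ j)).unique e1 hj3.symm
      have hjc : j ∈ colsOf (EvansPLS n a) := ⟨(1, j, j), mem1 j hjmem.1 hja, rfl⟩
      have hnc : n ∈ colsOf (EvansPLS n a) := ⟨(n, n, n), mem2 n han le_rfl, rfl⟩
      have := h₂ hjc hnc this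
      omega
    · have hja' : a < j := lt_of_not_ge hja
      have e1 : f (I₁ j) (I₂ n) = I₃ j := hmul (j, n, j) (mem2 j hja' hjmem.2)
      have := (hR (I₂ n) (I₃ j)).unique e1 hj3.symm
      have hjr : j ∈ rowsOf (EvansPLS n a) := ⟨(j, n, j), mem2 j hja' hjmem.2, rfl⟩
      have h1r : (1 : ℕ) ∈ rowsOf (EvansPLS n a) := ⟨(1, 1, 1), mem1 1 le_rfl ha, rfl⟩
      have := h₁ hjr h1r this
      omega
  refine ⟨key, ?_⟩
  intro G instG instF hcard h
  obtain ⟨I₁, I₂, I₃, h₁, h₂, h₃, hmul⟩ := h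
  refine key G instF (· * ·) hcard ?_ ?_ ⟨I₁, I₂, I₃, h₁, h₂, h₃, hmul⟩
  · exact fun x y => ⟨x⁻¹ * y, by group, fun z hz => by
      simpa using congrArg (x⁻¹ * ·) hz⟩
  · exact fun x y => ⟨y * x⁻¹, by group, fun z hz => by
      simpa using congrArg (· * x⁻¹) hz⟩
end

section
/- For every integer n > 1, ψ(n) < n; that is, there exists a PLS of size at most n that cannot be embedded into any group of order n. -/
/-- ψ(n) < n for n > 1: there is a PLS of size at most n that embeds in
no group of order n. -/
theorem psi_lt_self (n : ℕ) (hn : 1 < n) :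
    ∃ P : Finset (ℕ × ℕ × ℕ), IsPLS P ∧ P.card ≤ n ∧
      ∀ (G : Type) (instG : Group G) (instF : Fintype G),
        @Fintype.card G instF = n → ¬ @EmbedsIn P G instG := by
  set m := n - 1 with hm
  have hm0 : 0 < m := by omega
  have hmn : m < n := by omega
  set P : Finset (ℕ × ℕ × ℕ) :=
    insert (1, m, m) ((Finset.range m).image fun j => (0, j, j)) with hP
  have hmem : ∀ t : ℕ × ℕ × ℕ, t ∈ P ↔ t = (1, m, m) ∨ ∃ j, j < m ∧ t = (0, j, j) := by
    intro t
    simp only [hP, Finset.mem_insert, Finset.mem_image, Finset.mem_range]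
    constructor
    · rintro (h | ⟨j, hj, h⟩)
      · exact Or.inl h
      · exact Or.inr ⟨j, hj, h.symm⟩
    · rintro (h | ⟨j, hj, h⟩)
      · exact Or.inl h
      · exact Or.inr ⟨j, hj, h.symm⟩
  refine ⟨P, ⟨⟨(1, m, m), by rw [hmem]; exact Or.inl rfl⟩, ?_⟩, ?_, ?_⟩
  · -- PLS property
    intro t₁ ht₁ t₂ ht₂ hne
    rw [hmem] at ht₁ ht₂
    rcases ht₁ with h1 | ⟨j, hj, h1⟩ <;> rcases ht₂ with h2 | ⟨k, hk, h2⟩ <;>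
      subst h1 <;> subst h2 <;> simp_all <;> omega
  · -- cardinality
    calc P.card ≤ ((Finset.range m).image fun j => ((0 : ℕ), j, j)).card + 1 :=
          Finset.card_insert_le _ _
      _ ≤ m + 1 := by
          have := Finset.card_image_le (s := Finset.range m)
            (f := fun j => ((0 : ℕ), j, j))
          simpa using Nat.add_le_add_right (by simpa using this) 1
      _ ≤ n := by omega
  · -- non-embeddability
    intro G instG instF hcard ⟨I₁, I₂, I₃, h1, h2, h3, heq⟩
    -- rows 0 and 1 occur
    have hr0 : (0 : ℕ) ∈ rowsOf P := ⟨(0, 0, 0), by rw [hmem]; exact Or.inr ⟨0, hm0, rfl⟩, rfl⟩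
    have hr1 : (1 : ℕ) ∈ rowsOf P := ⟨(1, m, m), by rw [hmem]; exact Or.inl rfl, rfl⟩
    -- all columns and symbols < n occur
    have hcol : ∀ k < n, k ∈ colsOf P := by
      intro k hk
      rcases lt_or_ge k m with h | h
      · exact ⟨(0, k, k), by rw [hmem]; exact Or.inr ⟨k, h, rfl⟩, rfl⟩
      · have : k = m := by omega
        subst this
        exact ⟨(1, m, m), by rw [hmem]; exact Or.inl rfl, rfl⟩
    have hsym : ∀ k < n, k ∈ symsOf P := by
      intro k hk
      rcases lt_or_ge k m with h | h
      · exact ⟨(0, k, k), by rw [hmem]; exact Or.inr ⟨k, h, rfl⟩, rfl⟩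
      · have : k = m := by omega
        subst this
        exact ⟨(1, m, m), by rw [hmem]; exact Or.inl rfl, rfl⟩
    -- the triples give equations
    have hrow : ∀ j < m, I₁ 0 * I₂ j = I₃ j := by
      intro j hj
      exact heq (0, j, j) (by rw [hmem]; exact Or.inr ⟨j, hj, rfl⟩)
    have hb : I₁ 1 * I₂ m = I₃ m := heq (1, m, m) (by rw [hmem]; exact Or.inl rfl)
    have : DecidableEq G := Classical.decEq G
    -- I₃ restricted to range n is a bijection onto G
    have hinj : Set.InjOn I₃ ↑(Finset.range n) := by
      intro x hx y hy hxy
      exact h3 (hsym x (by simpa using hx)) (hsym y (by simpa using hy)) hxy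
    have hcardT : ((Finset.range n).image I₃).card = n := by
      rw [Finset.card_image_of_injOn hinj, Finset.card_range]
    have hT : (Finset.range n).image I₃ = Finset.univ :=
      Finset.eq_univ_of_card _ (by rw [hcardT, hcard])
    -- the element I₁ 0 * I₂ m is some I₃ k
    have : I₁ 0 * I₂ m ∈ (Finset.range n).image I₃ := by
      rw [hT]; exact Finset.mem_univ _
    obtain ⟨k, hk, hk3⟩ := Finset.mem_image.mp this
    rw [Finset.mem_range] at hk
    rcases lt_or_ge k m with hkm | hkm
    · -- then I₂ k = I₂ m, contradicting column injectivity
      have : I₁ 0 * I₂ k = I₁ 0 * I₂ m := by rw [hrow k hkm, hk3]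
      have hkk : I₂ k = I₂ m := mul_left_cancel this
      have := h2 (hcol k (by omega)) (hcol m hmn) hkk
      omega
    · -- k = m, so I₁ 0 * I₂ m = I₃ m = I₁ 1 * I₂ m, forcing I₁ 0 = I₁ 1
      have hkm' : k = m := by omega
      subst hkm'
      have : I₁ 0 * I₂ m = I₁ 1 * I₂ m := hk3.symm.trans hb.symm
      have h01 : I₁ 0 = I₁ 1 := mul_right_cancel this
      have := h1 hr0 hr1 h01
      omega
end

section
/- Let ℓ ≥ 2 be an integer and let C_ℓ be the PLS with 2 rows, ℓ columns and ℓ distinct symbols a₁,…,a_ℓ consisting of the triples (1, i, a_i) for 1 ≤ i ≤ ℓ and the triples (2, i, a_{i+1}) for 1 ≤ i ≤ ℓ, where indices are read modulo ℓ (so a_{ℓ+1} = a₁). If C_ℓ embeds in a finite group G, then ℓ divides the order of G; indeed if I₁ maps the two rows to r₁ and r₂ then r₁⁻¹r₂ has order ℓ in G. -/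
/-- The row cycle `C_ℓ`: triples (1,i,i) and (2,i,(i mod ℓ)+1) for 1 ≤ i ≤ ℓ,
where symbol i plays the role of aᵢ (so row 2 holds a_{i+1}, indices mod ℓ). -/
def rowCycle (ℓ : ℕ) : Finset (ℕ × ℕ × ℕ) :=
  ((Finset.Icc 1 ℓ).image fun i => (1, i, i)) ∪
    ((Finset.Icc 1 ℓ).image fun i => (2, i, i % ℓ + 1))

theorem rowCycle_forces_order (ℓ : ℕ) (hℓ : 2 ≤ ℓ) (G : Type*) [Group G] [Fintype G]
    (I₁ I₂ I₃ : ℕ → G)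
    (h₁ : Set.InjOn I₁ (rowsOf (rowCycle ℓ)))
    (h₂ : Set.InjOn I₂ (colsOf (rowCycle ℓ)))
    (h₃ : Set.InjOn I₃ (symsOf (rowCycle ℓ)))
    (heq : ∀ t ∈ rowCycle ℓ, I₁ t.1 * I₂ t.2.1 = I₃ t.2.2) :
    orderOf ((I₁ 1)⁻¹ * I₁ 2) = ℓ ∧ ℓ ∣ Fintype.card G := by
  set h : G := I₁ 2 * (I₁ 1)⁻¹ with hh
  have hmem1 : ∀ i, 1 ≤ i → i ≤ ℓ → ((1, i, i) : ℕ × ℕ × ℕ) ∈ rowCycle ℓ := by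
    intro i hi hi'
    exact Finset.mem_union_left _ (Finset.mem_image.2 ⟨i, Finset.mem_Icc.2 ⟨hi, hi'⟩, rfl⟩)
  have hmem2 : ∀ i, 1 ≤ i → i ≤ ℓ → ((2, i, i % ℓ + 1) : ℕ × ℕ × ℕ) ∈ rowCycle ℓ := by
    intro i hi hi'
    exact Finset.mem_union_right _ (Finset.mem_image.2 ⟨i, Finset.mem_Icc.2 ⟨hi, hi'⟩, rfl⟩)
  have hsym : ∀ s, 1 ≤ s → s ≤ ℓ → s ∈ symsOf (rowCycle ℓ) := by
    intro s hs hs'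
    exact ⟨(1, s, s), hmem1 s hs hs', rfl⟩
  have key : ∀ i, 1 ≤ i → i ≤ ℓ → h * I₃ i = I₃ (i % ℓ + 1) := by
    intro i hi hi'
    have e1 := heq _ (hmem1 i hi hi')
    have e2 := heq _ (hmem2 i hi hi')
    simp only at e1 e2
    rw [hh, ← e1, ← e2]
    group
  have pow : ∀ k, k < ℓ → h ^ k * I₃ 1 = I₃ (k + 1) := by
    intro k
    induction k with
    | zero => simp
    | succ n ih =>
        intro hn
        have hn' : n < ℓ := Nat.lt_of_succ_lt hn
        rw [pow_succ', mul_assoc, ih hn',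
          key (n + 1) (Nat.succ_le_succ (Nat.zero_le n)) (le_of_lt hn),
          Nat.mod_eq_of_lt hn]
  have hpow_l : h ^ ℓ = 1 := by
    have hl1 : ℓ - 1 < ℓ := Nat.sub_lt (by omega) one_pos
    have : h ^ ℓ * I₃ 1 = I₃ 1 := by
      have : h ^ ℓ = h * h ^ (ℓ - 1) := by
        rw [← pow_succ', Nat.sub_add_cancel (by omega)]
      rw [this, mul_assoc, pow _ hl1, Nat.sub_add_cancel (by omega),
        key ℓ (by omega) le_rfl, Nat.mod_self]
    exact mul_right_cancel (by rw [one_mul]; exact this)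
  have hord : orderOf h = ℓ := by
    rw [orderOf_eq_iff (by omega)]
    refine ⟨hpow_l, fun m hm hm0 hcon => ?_⟩
    have := pow m hm
    rw [hcon, one_mul] at this
    have hne : m + 1 ≠ 1 := by omega
    exact hne (h₃ (hsym (m + 1) (by omega) (by omega)) (hsym 1 (by omega) (by omega))
      this.symm)
  have hsc : SemiconjBy (I₁ 1) ((I₁ 1)⁻¹ * I₁ 2) h := by
    simp [SemiconjBy, hh, mul_assoc]
  have hord' : orderOf ((I₁ 1)⁻¹ * I₁ 2) = ℓ := by
    rw [hsc.orderOf_eq (I₁ 1), hord]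
  exact ⟨hord', hord' ▸ orderOf_dvd_card⟩
end

section
/- Let a, b, c, d be four distinct symbols and let P be the PLS with triples (1,1,a), (1,2,b), (2,1,c), (2,2,a), (2,3,b), (3,2,c), (3,3,d). Then P cannot be embedded into any group. -/
lemma quad_key {G : Type*} [Group G] (r1 r2 r3 c1 c2 c3 : G)
    (h4 : r2 * c2 = r1 * c1) (h5 : r2 * c3 = r1 * c2) (h6 : r3 * c2 = r2 * c1) :
    r3 * c3 = r1 * c1 := by
  have hr3 : r3 = r2 * c1 * c2⁻¹ := by rw [← h6]; group
  have hc3 : c3 = r2⁻¹ * (r1 * c2) := by rw [← h5]; group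
  have hr2 : r2 = r1 * c1 * c2⁻¹ := by rw [← h4]; group
  rw [hr3, hc3, hr2]; group

/-- The first PLS of \eqref{e:quadcrit} fails the quadrangle criterion and embeds
in no group. -/
theorem quadcrit1_not_embeddable (a b c d : ℕ)
    (hab : a ≠ b) (hac : a ≠ c) (had : a ≠ d) (hbc : b ≠ c) (hbd : b ≠ d)
    (hcd : c ≠ d) (G : Type*) [Group G] :
    ¬ EmbedsIn ({(1,1,a), (1,2,b), (2,1,c), (2,2,a), (2,3,b), (3,2,c), (3,3,d)} :
        Finset (ℕ × ℕ × ℕ)) G := by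
  rintro ⟨I₁, I₂, I₃, h1, h2, h3, heq⟩
  set P : Finset (ℕ × ℕ × ℕ) :=
    {(1,1,a), (1,2,b), (2,1,c), (2,2,a), (2,3,b), (3,2,c), (3,3,d)} with hP
  have e1 : I₁ 1 * I₂ 1 = I₃ a := heq (1,1,a) (by simp [hP])
  have e2 : I₁ 1 * I₂ 2 = I₃ b := heq (1,2,b) (by simp [hP])
  have e3 : I₁ 2 * I₂ 1 = I₃ c := heq (2,1,c) (by simp [hP])
  have e4 : I₁ 2 * I₂ 2 = I₃ a := heq (2,2,a) (by simp [hP])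
  have e5 : I₁ 2 * I₂ 3 = I₃ b := heq (2,3,b) (by simp [hP])
  have e6 : I₁ 3 * I₂ 2 = I₃ c := heq (3,2,c) (by simp [hP])
  have e7 : I₁ 3 * I₂ 3 = I₃ d := heq (3,3,d) (by simp [hP])
  have key : I₁ 3 * I₂ 3 = I₁ 1 * I₂ 1 :=
    quad_key (I₁ 1) (I₁ 2) (I₁ 3) (I₂ 1) (I₂ 2) (I₂ 3)
      (e4.trans e1.symm) (e5.trans e2.symm) (e6.trans e3.symm)
  have hda : I₃ d = I₃ a := by rw [← e7, key, e1]
  have hdmem : d ∈ symsOf P := ⟨(3,3,d), by simp [hP], rfl⟩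
  have hamem : a ∈ symsOf P := ⟨(1,1,a), by simp [hP], rfl⟩
  exact had (h3 hamem hdmem hda.symm)
end

section
/- Let a, b, c, d be four distinct symbols and let P be the PLS with triples (1,1,a), (1,2,b), (2,1,c), (2,2,a), (2,3,b), (3,2,d), (3,3,a). Then P cannot be embedded into any group. -/
/-- The second PLS of \eqref{e:quadcrit} fails the quadrangle criterion and embeds
in no group. -/
theorem quadcrit2_not_embeddable (a b c d : ℕ)
    (hab : a ≠ b) (hac : a ≠ c) (had : a ≠ d) (hbc : b ≠ c) (hbd : b ≠ d)
    (hcd : c ≠ d) (G : Type*) [Group G] :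
    ¬ EmbedsIn ({(1,1,a), (1,2,b), (2,1,c), (2,2,a), (2,3,b), (3,2,d), (3,3,a)} :
        Finset (ℕ × ℕ × ℕ)) G := by
  rintro ⟨I₁, I₂, I₃, h1, h2, h3, hmul⟩
  have e1 := hmul (1,1,a) (by simp)
  have e2 := hmul (1,2,b) (by simp)
  have e3 := hmul (2,1,c) (by simp)
  have e4 := hmul (2,2,a) (by simp)
  have e5 := hmul (2,3,b) (by simp)
  have e6 := hmul (3,2,d) (by simp)
  have e7 := hmul (3,3,a) (by simp)
  simp only at e1 e2 e3 e4 e5 e6 e7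
  have key : I₃ d = I₃ c := by
    rw [← e6, ← e3]
    rw [show I₁ 3 = I₃ a * (I₂ 3)⁻¹ by rw [← e7]; group]
    rw [show I₂ 3 = (I₁ 2)⁻¹ * I₃ b by rw [← e5]; group]
    rw [show I₂ 2 = (I₁ 2)⁻¹ * I₃ a by rw [← e4]; group]
    rw [show I₂ 1 = (I₁ 1)⁻¹ * I₃ a by rw [← e1]; group]
    rw [show I₁ 1 = I₃ b * ((I₁ 2)⁻¹ * I₃ a)⁻¹ by rw [← e2, show I₂ 2 = (I₁ 2)⁻¹ * I₃ a by rw [← e4]; group]; group]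
    group
  have hd : d ∈ symsOf ({(1,1,a), (1,2,b), (2,1,c), (2,2,a), (2,3,b), (3,2,d), (3,3,a)} : Finset (ℕ × ℕ × ℕ)) := ⟨(3,2,d), by simp, rfl⟩
  have hc : c ∈ symsOf ({(1,1,a), (1,2,b), (2,1,c), (2,2,a), (2,3,b), (3,2,d), (3,3,a)} : Finset (ℕ × ℕ × ℕ)) := ⟨(2,1,c), by simp, rfl⟩
  exact hcd (h3 hc hd key.symm)
end

section
/- For every positive integer n, ψ(n) ≤ 6; that is, there exists a PLS of size 7 that cannot be embedded into any group of order n. -/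
/-- ψ(n) ≤ 6 for all n: there is a PLS of size 7 that embeds in no group of order n. -/
theorem psi_le_six (n : ℕ) (hn : 0 < n) :
    ∃ P : Finset (ℕ × ℕ × ℕ), IsPLS P ∧ P.card = 7 ∧
      ∀ (G : Type) (instG : Group G) (instF : Fintype G),
        @Fintype.card G instF = n → ¬ @EmbedsIn P G instG := by
  refine ⟨{(0,0,0),(0,1,1),(0,2,2),(1,0,2),(1,1,0),(2,0,1),(2,2,3)}, ⟨⟨(0,0,0), by decide⟩, by decide⟩, by decide, ?_⟩
  intro G instG instF _ hemb
  obtain ⟨I₁, I₂, I₃, _, _, h₃, hm⟩ := hemb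
  set P : Finset (ℕ × ℕ × ℕ) := {(0,0,0),(0,1,1),(0,2,2),(1,0,2),(1,1,0),(2,0,1),(2,2,3)} with hP
  have e1 : I₁ 0 * I₂ 0 = I₃ 0 := hm (0,0,0) (by decide)
  have e2 : I₁ 0 * I₂ 1 = I₃ 1 := hm (0,1,1) (by decide)
  have e3 : I₁ 0 * I₂ 2 = I₃ 2 := hm (0,2,2) (by decide)
  have e4 : I₁ 1 * I₂ 0 = I₃ 2 := hm (1,0,2) (by decide)
  have e5 : I₁ 1 * I₂ 1 = I₃ 0 := hm (1,1,0) (by decide)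
  have e6 : I₁ 2 * I₂ 0 = I₃ 1 := hm (2,0,1) (by decide)
  have e7 : I₁ 2 * I₂ 2 = I₃ 3 := hm (2,2,3) (by decide)
  have hX : I₂ 0 = (I₁ 0)⁻¹ * I₃ 0 := by rw [← e1]; group
  have hY : I₂ 1 = (I₁ 0)⁻¹ * I₃ 1 := by rw [← e2]; group
  have hZ : I₂ 2 = (I₁ 0)⁻¹ * I₃ 2 := by rw [← e3]; group
  have hdS : I₁ 1 * (I₁ 0)⁻¹ * I₃ 0 = I₃ 2 := by rw [← e4, hX]; group
  have hdT : I₁ 1 * (I₁ 0)⁻¹ * I₃ 1 = I₃ 0 := by rw [← e5, hY]; group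
  have hkS : I₁ 2 * (I₁ 0)⁻¹ * I₃ 0 = I₃ 1 := by rw [← e6, hX]; group
  have hW : I₃ 3 = I₁ 2 * (I₁ 0)⁻¹ * I₃ 2 := by rw [← e7, hZ]; group
  -- d * k = 1 where d = I₁ 1 * (I₁ 0)⁻¹, k = I₁ 2 * (I₁ 0)⁻¹
  have h : (I₁ 1 * (I₁ 0)⁻¹) * ((I₁ 2 * (I₁ 0)⁻¹) * I₃ 0) = I₃ 0 := by
    rw [show (I₁ 2 * (I₁ 0)⁻¹) * I₃ 0 = I₃ 1 from hkS]; exact hdT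
  have hdk : (I₁ 1 * (I₁ 0)⁻¹) * (I₁ 2 * (I₁ 0)⁻¹) = 1 := by
    have h2 : ((I₁ 1 * (I₁ 0)⁻¹) * (I₁ 2 * (I₁ 0)⁻¹)) * I₃ 0 = 1 * I₃ 0 := by
      rw [one_mul, mul_assoc]; exact h
    exact mul_right_cancel h2
  have hkd : (I₁ 2 * (I₁ 0)⁻¹) * (I₁ 1 * (I₁ 0)⁻¹) = 1 := by
    have hinv : (I₁ 1 * (I₁ 0)⁻¹)⁻¹ = I₁ 2 * (I₁ 0)⁻¹ := mul_eq_one_iff_inv_eq.mp hdk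
    rw [← hinv]; group
  have key : I₃ 3 = I₃ 0 := by
    rw [hW, ← hdS, ← mul_assoc, hkd, one_mul]
  have mem3 : (3 : ℕ) ∈ symsOf P := ⟨(2,2,3), by decide, rfl⟩
  have mem0 : (0 : ℕ) ∈ symsOf P := ⟨(0,0,0), by decide, rfl⟩
  have : (3 : ℕ) = 0 := h₃ mem3 mem0 key
  simp at this
end

section
/- Let G be a group of order n and let P be a PLS whose order (the maximum of its number of rows, number of columns, and number of distinct symbols) is at most n. Suppose P contains a triple (r,c,s) such that: (i) P' := P \ {(r,c,s)} contains no triple whose row is r, and (ii) for each triple (r',c',s') of P' there is a triple of P' with row r' and column c, or a triple of P' with row r' and symbol s. If P' is nonempty and embeds in G, then P embeds in G. -/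
lemma extend_embed {G : Type*} [Group G] (P : Finset (ℕ × ℕ × ℕ))
    (r c s : ℕ) (hmem : (r,c,s) ∈ P)
    (I₁ I₂ I₃ : ℕ → G)
    (h1 : Set.InjOn I₁ (rowsOf (P.erase (r,c,s))))
    (h2 : Set.InjOn I₂ (colsOf (P.erase (r,c,s))))
    (h3 : Set.InjOn I₃ (symsOf (P.erase (r,c,s))))
    (heq : ∀ t ∈ P.erase (r,c,s), I₁ t.1 * I₂ t.2.1 = I₃ t.2.2)
    (hi : ∀ t ∈ P.erase (r, c, s), t.1 ≠ r)
    (g a b : G) (hgab : g * a = b)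
    (Hg : ∀ r' ∈ rowsOf (P.erase (r,c,s)), I₁ r' ≠ g)
    (Ha1 : ∀ c' ∈ colsOf (P.erase (r,c,s)), c' ≠ c → I₂ c' ≠ a)
    (Ha2 : c ∈ colsOf (P.erase (r,c,s)) → I₂ c = a)
    (Hb1 : ∀ s' ∈ symsOf (P.erase (r,c,s)), s' ≠ s → I₃ s' ≠ b)
    (Hb2 : s ∈ symsOf (P.erase (r,c,s)) → I₃ s = b) :
    EmbedsIn P G := by
  classical
  set P' := P.erase (r,c,s) with hP'
  have hrnot : r ∉ rowsOf P' := by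
    rintro ⟨t, ht, hteq⟩; exact hi t ht hteq
  have hrows : ∀ z ∈ rowsOf P, z = r ∨ z ∈ rowsOf P' := by
    rintro z ⟨t, ht, rfl⟩
    by_cases h : t = (r,c,s)
    · left; rw [h]
    · right; exact ⟨t, Finset.mem_erase.2 ⟨h, ht⟩, rfl⟩
  have hcols : ∀ z ∈ colsOf P, z = c ∨ z ∈ colsOf P' := by
    rintro z ⟨t, ht, rfl⟩
    by_cases h : t = (r,c,s)
    · left; rw [h]
    · right; exact ⟨t, Finset.mem_erase.2 ⟨h, ht⟩, rfl⟩
  have hsyms : ∀ z ∈ symsOf P, z = s ∨ z ∈ symsOf P' := by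
    rintro z ⟨t, ht, rfl⟩
    by_cases h : t = (r,c,s)
    · left; rw [h]
    · right; exact ⟨t, Finset.mem_erase.2 ⟨h, ht⟩, rfl⟩
  refine ⟨Function.update I₁ r g, Function.update I₂ c a, Function.update I₃ s b, ?_, ?_, ?_, ?_⟩
  · intro x hx y hy hxy
    rcases hrows x hx with rfl | hx' <;> rcases hrows y hy with h | hy'
    · exact h.symm
    · have hyx : y ≠ x := fun h => hrnot (h ▸ hy')
      rw [Function.update_self, Function.update_of_ne hyx] at hxy
      exact absurd hxy.symm (Hg y hy')
    · subst h
      have hxy' : x ≠ y := fun h => hrnot (h ▸ hx')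
      rw [Function.update_self, Function.update_of_ne hxy'] at hxy
      exact absurd hxy (Hg x hx')
    · have hxr : x ≠ r := fun h => hrnot (h ▸ hx')
      have hyr : y ≠ r := fun h => hrnot (h ▸ hy')
      rw [Function.update_of_ne hxr, Function.update_of_ne hyr] at hxy
      exact h1 hx' hy' hxy
  · intro x hx y hy hxy
    rcases hcols x hx with rfl | hx' <;> rcases hcols y hy with h | hy'
    · exact h.symm
    · by_cases hyx : y = x
      · exact hyx.symm
      · rw [Function.update_self, Function.update_of_ne hyx] at hxy
        exact absurd hxy.symm (Ha1 y hy' hyx)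
    · subst h
      by_cases hxy' : x = y
      · exact hxy'
      · rw [Function.update_self, Function.update_of_ne hxy'] at hxy
        exact absurd hxy (Ha1 x hx' hxy')
    · by_cases hxc : x = c
      · by_cases hyc : y = c
        · rw [hxc, hyc]
        · rw [hxc, Function.update_self, Function.update_of_ne hyc] at hxy
          exact absurd hxy.symm (Ha1 y hy' hyc)
      · by_cases hyc : y = c
        · rw [hyc, Function.update_self, Function.update_of_ne hxc] at hxy
          exact absurd hxy (Ha1 x hx' hxc)
        · rw [Function.update_of_ne hxc, Function.update_of_ne hyc] at hxy
          exact h2 hx' hy' hxy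
  · intro x hx y hy hxy
    rcases hsyms x hx with rfl | hx' <;> rcases hsyms y hy with h | hy'
    · exact h.symm
    · by_cases hyx : y = x
      · exact hyx.symm
      · rw [Function.update_self, Function.update_of_ne hyx] at hxy
        exact absurd hxy.symm (Hb1 y hy' hyx)
    · subst h
      by_cases hxy' : x = y
      · exact hxy'
      · rw [Function.update_self, Function.update_of_ne hxy'] at hxy
        exact absurd hxy (Hb1 x hx' hxy')
    · by_cases hxs2 : x = s
      · by_cases hyc : y = s
        · rw [hxs2, hyc]
        · rw [hxs2, Function.update_self, Function.update_of_ne hyc] at hxy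
          exact absurd hxy.symm (Hb1 y hy' hyc)
      · by_cases hyc : y = s
        · rw [hyc, Function.update_self, Function.update_of_ne hxs2] at hxy
          exact absurd hxy (Hb1 x hx' hxs2)
        · rw [Function.update_of_ne hxs2, Function.update_of_ne hyc] at hxy
          exact h3 hx' hy' hxy
  · intro t ht
    by_cases h : t = (r,c,s)
    · subst h
      simp only [Function.update_self]
      exact hgab
    · have ht' : t ∈ P' := Finset.mem_erase.2 ⟨h, ht⟩
      have h1' : Function.update I₁ r g t.1 = I₁ t.1 :=
        Function.update_of_ne (hi t ht') _ _
      have h2' : Function.update I₂ c a t.2.1 = I₂ t.2.1 := by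
        by_cases hc : t.2.1 = c
        · rw [hc, Function.update_self, ← Ha2 ⟨t, ht', hc⟩]
        · exact Function.update_of_ne hc _ _
      have h3' : Function.update I₃ s b t.2.2 = I₃ t.2.2 := by
        by_cases hs : t.2.2 = s
        · rw [hs, Function.update_self, ← Hb2 ⟨t, ht', hs⟩]
        · exact Function.update_of_ne hs _ _
      rw [h1', h2', h3']
      exact heq t ht'


/-- Lemma (rulenoopt): if the PLS `P` of order at most `n` has a triple `(r,c,s)`
that is alone in row `r`, and every other row meets column `c` or symbol `s` in
`P' = P \ {(r,c,s)}`, then an embedding of `P'` in a group `G` of order `n`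
extends to an embedding of `P`. -/
theorem rulenoopt (G : Type*) [Group G] [Fintype G] (n : ℕ) (hG : Fintype.card G = n)
    (P : Finset (ℕ × ℕ × ℕ)) (hP : IsPLS P)
    (hrows : (P.image fun t => t.1).card ≤ n)
    (hcols : (P.image fun t => t.2.1).card ≤ n)
    (hsyms : (P.image fun t => t.2.2).card ≤ n)
    (r c s : ℕ) (hmem : (r, c, s) ∈ P)
    (hi : ∀ t ∈ P.erase (r, c, s), t.1 ≠ r)
    (hii : ∀ t ∈ P.erase (r, c, s),
      (∃ u ∈ P.erase (r, c, s), u.1 = t.1 ∧ u.2.1 = c) ∨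
      (∃ u ∈ P.erase (r, c, s), u.1 = t.1 ∧ u.2.2 = s))
    (hne : (P.erase (r, c, s)).Nonempty)
    (hemb : EmbedsIn (P.erase (r, c, s)) G) :
    EmbedsIn P G := by
  classical
  obtain ⟨I₁, I₂, I₃, h1, h2, h3, heq⟩ := hemb
  set P' := P.erase (r, c, s) with hP'def
  have hsub : ∀ t ∈ P', t ∈ P := fun t ht => Finset.mem_of_mem_erase ht
  have hnet : ∀ t ∈ P', t ≠ (r, c, s) := fun t ht => (Finset.mem_erase.1 ht).1
  have factC : ∀ t ∈ P', t.2.1 = c → t.2.2 ≠ s := by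
    intro t ht htc hts
    exact hP.2 t (hsub t ht) (r, c, s) hmem (hnet t ht) (Or.inr (Or.inr ⟨htc, hts⟩))
  have factS : ∀ t ∈ P', t.2.2 = s → t.2.1 ≠ c := by
    intro t ht hts htc
    exact hP.2 t (hsub t ht) (r, c, s) hmem (hnet t ht) (Or.inr (Or.inr ⟨htc, hts⟩))
  by_cases hc : c ∈ colsOf P' <;> by_cases hs : s ∈ symsOf P'
  · -- both column c and symbol s occur in P'
    refine extend_embed P r c s hmem I₁ I₂ I₃ h1 h2 h3 heq hi
      (I₃ s * (I₂ c)⁻¹) (I₂ c) (I₃ s) (by group) ?_ ?_ (fun _ => rfl) ?_ (fun _ => rfl)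
    · rintro r' ⟨t, ht, rfl⟩ hEq
      rcases hii t ht with ⟨u, hu, hu1, hu2⟩ | ⟨u, hu, hu1, hu2⟩
      · have he := heq u hu
        rw [hu1, hu2] at he
        have h4 : I₃ u.2.2 = I₃ s := by rw [← he, hEq]; group
        exact factC u hu hu2 (h3 ⟨u, hu, rfl⟩ hs h4)
      · have he := heq u hu
        rw [hu1, hu2] at he
        have e6 := eq_mul_inv_of_mul_eq he
        have h5 := mul_left_cancel (e6.symm.trans hEq)
        exact factS u hu hu2 (h2 ⟨u, hu, rfl⟩ hc (inv_injective h5))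
    · intro c' hc' hne' heq'
      exact hne' (h2 hc' hc heq')
    · intro s' hs' hne' heq'
      exact hne' (h3 hs' hs heq')
  · -- column c occurs, symbol s does not
    have hsS : s ∉ P'.image (fun t => t.2.2) := by
      intro h
      obtain ⟨t, ht, hteq⟩ := Finset.mem_image.1 h
      exact hs ⟨t, ht, hteq⟩
    have hins : insert s (P'.image fun t => t.2.2) ⊆ P.image (fun t => t.2.2) := by
      intro x hx
      rcases Finset.mem_insert.1 hx with hxe | hx
      · rw [hxe]; exact Finset.mem_image.2 ⟨(r, c, s), hmem, rfl⟩
      · obtain ⟨t, ht, hteq⟩ := Finset.mem_image.1 hx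
        exact Finset.mem_image.2 ⟨t, hsub t ht, hteq⟩
    have hcard : (P'.image fun t => t.2.2).card < n := by
      have h9 := Finset.card_le_card hins
      rw [Finset.card_insert_of_notMem hsS] at h9
      omega
    have hFcard : ((P'.image fun t => t.2.2).image (fun x => I₃ x * (I₂ c)⁻¹)).card
        < Fintype.card G := by
      calc ((P'.image fun t => t.2.2).image (fun x => I₃ x * (I₂ c)⁻¹)).card
          ≤ (P'.image fun t => t.2.2).card := Finset.card_image_le
        _ < n := hcard
        _ = Fintype.card G := hG.symm
    have hFne : ((P'.image fun t => t.2.2).image (fun x => I₃ x * (I₂ c)⁻¹))ᶜ.Nonempty := by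
      rw [← Finset.card_pos, Finset.card_compl]
      omega
    obtain ⟨g, hg⟩ := hFne
    have key : ∀ x ∈ symsOf P', I₃ x * (I₂ c)⁻¹ ≠ g := by
      rintro x ⟨t, ht, rfl⟩ hx
      refine (Finset.mem_compl.1 hg) ?_
      exact Finset.mem_image.2 ⟨t.2.2, Finset.mem_image.2 ⟨t, ht, rfl⟩, hx⟩
    refine extend_embed P r c s hmem I₁ I₂ I₃ h1 h2 h3 heq hi
      g (I₂ c) (g * I₂ c) rfl ?_ ?_ (fun _ => rfl) ?_ (fun h => absurd h hs)
    · rintro r' ⟨t, ht, rfl⟩ hEq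
      rcases hii t ht with ⟨u, hu, hu1, hu2⟩ | ⟨u, hu, hu1, hu2⟩
      · have he := heq u hu
        rw [hu1, hu2] at he
        have e6 := eq_mul_inv_of_mul_eq he
        exact key u.2.2 ⟨u, hu, rfl⟩ (e6.symm.trans hEq)
      · exact hs ⟨u, hu, hu2⟩
    · intro c' hc' hne' heq'
      exact hne' (h2 hc' hc heq')
    · intro s' hs' hne' heq'
      refine key s' hs' ?_
      rw [heq']; group
  · -- symbol s occurs, column c does not
    have hcC : c ∉ P'.image (fun t => t.2.1) := by
      intro h
      obtain ⟨t, ht, hteq⟩ := Finset.mem_image.1 h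
      exact hc ⟨t, ht, hteq⟩
    have hins : insert c (P'.image fun t => t.2.1) ⊆ P.image (fun t => t.2.1) := by
      intro x hx
      rcases Finset.mem_insert.1 hx with hxe | hx
      · rw [hxe]; exact Finset.mem_image.2 ⟨(r, c, s), hmem, rfl⟩
      · obtain ⟨t, ht, hteq⟩ := Finset.mem_image.1 hx
        exact Finset.mem_image.2 ⟨t, hsub t ht, hteq⟩
    have hcard : (P'.image fun t => t.2.1).card < n := by
      have h9 := Finset.card_le_card hins
      rw [Finset.card_insert_of_notMem hcC] at h9
      omega
    have hFcard : ((P'.image fun t => t.2.1).image (fun x => I₃ s * (I₂ x)⁻¹)).card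
        < Fintype.card G := by
      calc ((P'.image fun t => t.2.1).image (fun x => I₃ s * (I₂ x)⁻¹)).card
          ≤ (P'.image fun t => t.2.1).card := Finset.card_image_le
        _ < n := hcard
        _ = Fintype.card G := hG.symm
    have hFne : ((P'.image fun t => t.2.1).image (fun x => I₃ s * (I₂ x)⁻¹))ᶜ.Nonempty := by
      rw [← Finset.card_pos, Finset.card_compl]
      omega
    obtain ⟨g, hg⟩ := hFne
    have key : ∀ x ∈ colsOf P', I₃ s * (I₂ x)⁻¹ ≠ g := by
      rintro x ⟨t, ht, rfl⟩ hx
      refine (Finset.mem_compl.1 hg) ?_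
      exact Finset.mem_image.2 ⟨t.2.1, Finset.mem_image.2 ⟨t, ht, rfl⟩, hx⟩
    refine extend_embed P r c s hmem I₁ I₂ I₃ h1 h2 h3 heq hi
      g (g⁻¹ * I₃ s) (I₃ s) (by group) ?_ ?_ (fun h => absurd h hc) ?_ (fun _ => rfl)
    · rintro r' ⟨t, ht, rfl⟩ hEq
      rcases hii t ht with ⟨u, hu, hu1, hu2⟩ | ⟨u, hu, hu1, hu2⟩
      · exact hc ⟨u, hu, hu2⟩
      · have he := heq u hu
        rw [hu1, hu2] at he
        have e6 := eq_mul_inv_of_mul_eq he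
        exact key u.2.1 ⟨u, hu, rfl⟩ (e6.symm.trans hEq)
    · intro c' hc' hne' heq'
      refine key c' hc' ?_
      rw [heq']; group
    · intro s' hs' hne' heq'
      exact hne' (h3 hs' hs heq')
  · exfalso
    obtain ⟨t, ht⟩ := hne
    rcases hii t ht with ⟨u, hu, _, hu2⟩ | ⟨u, hu, _, hu2⟩
    · exact hc ⟨u, hu, hu2⟩
    · exact hs ⟨u, hu, hu2⟩
end

section
/- Let G be a group of order n. Let P be a PLS with row set R, column set C and symbol set S, and suppose the triples of P with row r are exactly (r,c₁,s₁), …, (r,c_ℓ,s_ℓ) (with c₁,…,c_ℓ distinct and s₁,…,s_ℓ distinct). Let P' = P \ {(r,c_i,s_i) : 1 ≤ i ≤ ℓ}, assume P' is nonempty, and let R', C', S' be its row, column and symbol sets. Let C₁ = {1 ≤ i ≤ ℓ : c_i ∈ C'} and S₁ = {1 ≤ i ≤ ℓ : s_i ∈ S'}. If (i) C₁ ∩ S₁ = ∅, (ii) n ≥ |R| + |C₁|(|S'| − 1) + |S₁|(|C'| − 1), and (iii) n ≥ |C| + |S| − ℓ, then P embeds in G whenever P' embeds in G. -/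
lemma exists_injOn_finset {α β : Type*} [DecidableEq α] [DecidableEq β]
    (A : Finset α) (D : Finset β) (hcard : A.card ≤ D.card) (b₀ : β) :
    ∃ f : α → β, Set.InjOn f ↑A ∧ ∀ a ∈ A, f a ∈ D := by
  have h : Fintype.card ↥A ≤ Fintype.card ↥D := by
    rw [Fintype.card_coe, Fintype.card_coe]; exact hcard
  obtain ⟨e⟩ := Function.Embedding.nonempty_of_card_le h
  classical
  refine ⟨fun a => if h : a ∈ A then (e ⟨a, h⟩ : β) else b₀, ?_, ?_⟩
  · intro x hx y hy hxy
    simp only [dif_pos (Finset.mem_coe.mp hx), dif_pos (Finset.mem_coe.mp hy)] at hxy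
    exact congrArg Subtype.val (e.injective (Subtype.ext hxy))
  · intro a ha; simp only [dif_pos ha]; exact (e ⟨a, ha⟩).2


/-- Lemma (ruleshiftline): if row `r` of the PLS `P` consists exactly of the
triples `(r, c i, s i)` for `1 ≤ i ≤ ℓ`, and conditions (i)-(iii) hold, then an
embedding of `P' = P` minus row `r` in a group `G` of order `n` extends to an
embedding of `P`. -/
theorem ruleshiftline (G : Type*) [Group G] [Fintype G] (n : ℕ)
    (hG : Fintype.card G = n)
    (P : Finset (ℕ × ℕ × ℕ)) (hP : IsPLS P)
    (r ℓ : ℕ) (hℓ : 1 ≤ ℓ) (c s : ℕ → ℕ)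
    (hc : Set.InjOn c (Finset.Icc 1 ℓ : Set ℕ))
    (hs : Set.InjOn s (Finset.Icc 1 ℓ : Set ℕ))
    (hrow : P.filter (fun t => t.1 = r) = (Finset.Icc 1 ℓ).image fun i => (r, c i, s i))
    (P' : Finset (ℕ × ℕ × ℕ))
    (hP'def : P' = P \ ((Finset.Icc 1 ℓ).image fun i => (r, c i, s i)))
    (hne : P'.Nonempty)
    -- (i)  C₁ ∩ S₁ = ∅
    (hi : ∀ i ∈ Finset.Icc 1 ℓ,
      ¬ (c i ∈ P'.image (fun t => t.2.1) ∧ s i ∈ P'.image (fun t => t.2.2)))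
    -- (ii) n ≥ |R| + |C₁|·(|S'| − 1) + |S₁|·(|C'| − 1)
    (hii : n ≥ (P.image fun t => t.1).card
        + ((Finset.Icc 1 ℓ).filter fun i => c i ∈ P'.image fun t => t.2.1).card
            * ((P'.image fun t => t.2.2).card - 1)
        + ((Finset.Icc 1 ℓ).filter fun i => s i ∈ P'.image fun t => t.2.2).card
            * ((P'.image fun t => t.2.1).card - 1))
    -- (iii) n ≥ |C| + |S| − ℓ
    (hiii : n ≥ (P.image fun t => t.2.1).card + (P.image fun t => t.2.2).card - ℓ)
    (hemb : EmbedsIn P' G) :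
    EmbedsIn P G := by
  classical
  obtain ⟨I₁, I₂, I₃, hI₁, hI₂, hI₃, heqn⟩ := hemb
  set T := (Finset.Icc 1 ℓ).image (fun i => (r, c i, s i)) with hT
  set R' := P'.image (fun t => t.1) with hR'
  set C' := P'.image (fun t => t.2.1) with hC'
  set S' := P'.image (fun t => t.2.2) with hS'
  set R := P.image (fun t => t.1) with hR
  set CC := P.image (fun t => t.2.1) with hCC
  set SS := P.image (fun t => t.2.2) with hSS
  set C₁ := (Finset.Icc 1 ℓ).filter (fun i => c i ∈ C') with hC₁
  set S₁ := (Finset.Icc 1 ℓ).filter (fun i => s i ∈ S') with hS₁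
  -- basic structural facts
  have hTP : T ⊆ P := by rw [← hrow]; exact Finset.filter_subset _ _
  have hsplit : P' ∪ T = P := by rw [hP'def]; exact Finset.sdiff_union_of_subset hTP
  have hmemT : ∀ i ∈ Finset.Icc 1 ℓ, (r, c i, s i) ∈ P := fun i hi' =>
    hTP (Finset.mem_image_of_mem _ hi')
  have hP'P : P' ⊆ P := by rw [hP'def]; exact Finset.sdiff_subset
  have hP'r : ∀ t ∈ P', t.1 ≠ r := by
    intro t ht htr
    rw [hP'def] at ht
    have h2 : t ∈ T := by
      rw [← hrow]; exact Finset.mem_filter.mpr ⟨(Finset.mem_sdiff.mp ht).1, htr⟩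
    exact (Finset.mem_sdiff.mp ht).2 h2
  have hsplit' : ∀ t ∈ P, t ∈ P' ∨ ∃ i ∈ Finset.Icc 1 ℓ, t = (r, c i, s i) := by
    intro t ht
    rw [← hsplit] at ht
    rcases Finset.mem_union.mp ht with h | h
    · exact Or.inl h
    · right
      obtain ⟨i, hi', hit⟩ := Finset.mem_image.mp h
      exact ⟨i, hi', hit.symm⟩
  -- injectivity restatements
  have injR : ∀ t₁ ∈ P', ∀ t₂ ∈ P', I₁ t₁.1 = I₁ t₂.1 → t₁.1 = t₂.1 := by
    intro t₁ h1 t₂ h2 h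
    exact hI₁ ⟨t₁, h1, rfl⟩ ⟨t₂, h2, rfl⟩ h
  have injC : ∀ x ∈ C', ∀ z ∈ C', I₂ x = I₂ z → x = z := by
    intro x hx z hz h
    obtain ⟨t, ht, rfl⟩ := Finset.mem_image.mp hx
    obtain ⟨u, hu, rfl⟩ := Finset.mem_image.mp hz
    exact hI₂ ⟨t, ht, rfl⟩ ⟨u, hu, rfl⟩ h
  have injS : ∀ x ∈ S', ∀ z ∈ S', I₃ x = I₃ z → x = z := by
    intro x hx z hz h
    obtain ⟨t, ht, rfl⟩ := Finset.mem_image.mp hx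
    obtain ⟨u, hu, rfl⟩ := Finset.mem_image.mp hz
    exact hI₃ ⟨t, ht, rfl⟩ ⟨u, hu, rfl⟩ h
  -- cardinality facts
  have hIcc : (Finset.Icc 1 ℓ).card = ℓ := by rw [Nat.card_Icc]; omega
  have hrmem : r ∈ R := by
    have h1 : (1:ℕ) ∈ Finset.Icc 1 ℓ := Finset.mem_Icc.mpr ⟨le_refl 1, hℓ⟩
    exact Finset.mem_image.mpr ⟨(r, c 1, s 1), hmemT 1 h1, rfl⟩
  have hRpos : 1 ≤ R.card := Finset.card_pos.mpr ⟨r, hrmem⟩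
  have hR'card : R'.card ≤ R.card - 1 := by
    have hsub : R' ⊆ R.erase r := by
      intro x hx
      obtain ⟨t, ht, rfl⟩ := Finset.mem_image.mp hx
      exact Finset.mem_erase.mpr ⟨hP'r t ht, Finset.mem_image.mpr ⟨t, hP'P ht, rfl⟩⟩
    calc R'.card ≤ (R.erase r).card := Finset.card_le_card hsub
    _ = R.card - 1 := Finset.card_erase_of_mem hrmem
  have hC₁sub : C₁ ⊆ Finset.Icc 1 ℓ := Finset.filter_subset _ _
  have hS₁sub : S₁ ⊆ Finset.Icc 1 ℓ := Finset.filter_subset _ _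
  have hCCcard : CC.card + C₁.card = C'.card + ℓ := by
    have h1 : CC = C' ∪ (Finset.Icc 1 ℓ).image c := by
      rw [hCC, ← hsplit, Finset.image_union, hT, Finset.image_image]
      rfl
    have h2 : C' ∩ (Finset.Icc 1 ℓ).image c = C₁.image c := by
      ext x
      simp only [Finset.mem_inter, Finset.mem_image, hC₁, Finset.mem_filter]
      constructor
      · rintro ⟨hx, i, hi', rfl⟩; exact ⟨i, ⟨hi', hx⟩, rfl⟩
      · rintro ⟨i, ⟨hi', hcx⟩, rfl⟩; exact ⟨hcx, i, hi', rfl⟩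
    have h3 := Finset.card_union_add_card_inter C' ((Finset.Icc 1 ℓ).image c)
    rw [h2, ← h1] at h3
    rw [Finset.card_image_of_injOn hc, hIcc] at h3
    rw [Finset.card_image_of_injOn (hc.mono (Finset.coe_subset.mpr hC₁sub))] at h3
    omega
  have hSScard : SS.card + S₁.card = S'.card + ℓ := by
    have h1 : SS = S' ∪ (Finset.Icc 1 ℓ).image s := by
      rw [hSS, ← hsplit, Finset.image_union, hT, Finset.image_image]
      rfl
    have h2 : S' ∩ (Finset.Icc 1 ℓ).image s = S₁.image s := by
      ext x
      simp only [Finset.mem_inter, Finset.mem_image, hS₁, Finset.mem_filter]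
      constructor
      · rintro ⟨hx, i, hi', rfl⟩; exact ⟨i, ⟨hi', hx⟩, rfl⟩
      · rintro ⟨i, ⟨hi', hcx⟩, rfl⟩; exact ⟨hcx, i, hi', rfl⟩
    have h3 := Finset.card_union_add_card_inter S' ((Finset.Icc 1 ℓ).image s)
    rw [h2, ← h1] at h3
    rw [Finset.card_image_of_injOn hs, hIcc] at h3
    rw [Finset.card_image_of_injOn (hs.mono (Finset.coe_subset.mpr hS₁sub))] at h3
    omega
  -- choices of witnessing triples for columns/symbols already present in P'
  have hchC : ∀ i : ℕ, ∃ t : ℕ × ℕ × ℕ, i ∈ C₁ → (t ∈ P' ∧ t.2.1 = c i) := by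
    intro i
    by_cases h : i ∈ C₁
    · have hci : c i ∈ C' := (Finset.mem_filter.mp h).2
      obtain ⟨t, ht, htc⟩ := Finset.mem_image.mp hci
      exact ⟨t, fun _ => ⟨ht, htc⟩⟩
    · exact ⟨(0,0,0), fun hh => absurd hh h⟩
  choose pickC hpickC using hchC
  have hchS : ∀ j : ℕ, ∃ t : ℕ × ℕ × ℕ, j ∈ S₁ → (t ∈ P' ∧ t.2.2 = s j) := by
    intro j
    by_cases h : j ∈ S₁
    · have hsj : s j ∈ S' := (Finset.mem_filter.mp h).2
      obtain ⟨t, ht, hts⟩ := Finset.mem_image.mp hsj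
      exact ⟨t, fun _ => ⟨ht, hts⟩⟩
    · exact ⟨(0,0,0), fun hh => absurd hh h⟩
  choose pickS hpickS using hchS
  -- the forbidden set for g
  set F₁ := R'.image I₁ with hF₁def
  set F₂ := C₁.biUnion (fun i => ((S'.image I₃).erase (I₃ (pickC i).2.2)).image
      (fun z => z * (I₂ (c i))⁻¹)) with hF₂def
  set F₃ := S₁.biUnion (fun j => ((C'.image I₂).erase (I₂ (pickS j).2.1)).image
      (fun z => I₃ (s j) * z⁻¹)) with hF₃def
  have hF₂card : F₂.card ≤ C₁.card * (S'.card - 1) := by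
    calc F₂.card ≤ ∑ i ∈ C₁, (((S'.image I₃).erase (I₃ (pickC i).2.2)).image
        (fun z => z * (I₂ (c i))⁻¹)).card := Finset.card_biUnion_le
    _ ≤ C₁.card * (S'.card - 1) := by
        rw [← smul_eq_mul]
        apply Finset.sum_le_card_nsmul
        intro i hi'
        have hmem : I₃ (pickC i).2.2 ∈ S'.image I₃ := by
          refine Finset.mem_image_of_mem _ ?_
          exact Finset.mem_image.mpr ⟨pickC i, (hpickC i hi').1, rfl⟩
        calc (((S'.image I₃).erase (I₃ (pickC i).2.2)).image
            (fun z => z * (I₂ (c i))⁻¹)).card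
            ≤ ((S'.image I₃).erase (I₃ (pickC i).2.2)).card := Finset.card_image_le
        _ = (S'.image I₃).card - 1 := Finset.card_erase_of_mem hmem
        _ ≤ S'.card - 1 := Nat.sub_le_sub_right Finset.card_image_le 1
  have hF₃card : F₃.card ≤ S₁.card * (C'.card - 1) := by
    calc F₃.card ≤ ∑ j ∈ S₁, (((C'.image I₂).erase (I₂ (pickS j).2.1)).image
        (fun z => I₃ (s j) * z⁻¹)).card := Finset.card_biUnion_le
    _ ≤ S₁.card * (C'.card - 1) := by
        rw [← smul_eq_mul]
        apply Finset.sum_le_card_nsmul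
        intro j hj'
        have hmem : I₂ (pickS j).2.1 ∈ C'.image I₂ := by
          refine Finset.mem_image_of_mem _ ?_
          exact Finset.mem_image.mpr ⟨pickS j, (hpickS j hj').1, rfl⟩
        calc (((C'.image I₂).erase (I₂ (pickS j).2.1)).image
            (fun z => I₃ (s j) * z⁻¹)).card
            ≤ ((C'.image I₂).erase (I₂ (pickS j).2.1)).card := Finset.card_image_le
        _ = (C'.image I₂).card - 1 := Finset.card_erase_of_mem hmem
        _ ≤ C'.card - 1 := Nat.sub_le_sub_right Finset.card_image_le 1
  have hFcard : (F₁ ∪ F₂ ∪ F₃).card < n := by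
    have h1 : (F₁ ∪ F₂ ∪ F₃).card ≤ F₁.card + F₂.card + F₃.card :=
      le_trans (Finset.card_union_le _ _) (Nat.add_le_add_right (Finset.card_union_le _ _) _)
    have h2 : F₁.card ≤ R'.card := Finset.card_image_le
    omega
  have hgex : (Finset.univ \ (F₁ ∪ F₂ ∪ F₃)).Nonempty := by
    rw [← Finset.card_pos, Finset.card_sdiff_of_subset (Finset.subset_univ _), Finset.card_univ, hG]
    omega
  obtain ⟨g, hg⟩ := hgex
  have hgF : g ∉ F₁ ∪ F₂ ∪ F₃ := (Finset.mem_sdiff.mp hg).2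
  -- properties of g
  have hg₁ : ∀ t ∈ P', g ≠ I₁ t.1 := by
    intro t ht h
    apply hgF
    exact Finset.mem_union.mpr (Or.inl (Finset.mem_union.mpr (Or.inl
      (Finset.mem_image.mpr ⟨t.1, Finset.mem_image.mpr ⟨t, ht, rfl⟩, h.symm⟩))))
  have hg₂ : ∀ i ∈ C₁, ∀ x ∈ S', g * I₂ (c i) ≠ I₃ x := by
    intro i hiC x hx h
    by_cases hx2 : I₃ x = I₃ (pickC i).2.2
    · have hp := hpickC i hiC
      have heqp := heqn _ hp.1
      rw [hp.2] at heqp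
      have h4 : g * I₂ (c i) = I₁ (pickC i).1 * I₂ (c i) := by
        rw [h, hx2, ← heqp]
      exact hg₁ _ hp.1 (mul_right_cancel h4)
    · apply hgF
      refine Finset.mem_union.mpr (Or.inl (Finset.mem_union.mpr (Or.inr ?_)))
      refine Finset.mem_biUnion.mpr ⟨i, hiC, ?_⟩
      refine Finset.mem_image.mpr ⟨I₃ x,
        Finset.mem_erase.mpr ⟨hx2, Finset.mem_image_of_mem _ hx⟩, ?_⟩
      rw [← h]
      exact mul_inv_cancel_right g _
  have hg₃ : ∀ j ∈ S₁, ∀ x ∈ C', g⁻¹ * I₃ (s j) ≠ I₂ x := by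
    intro j hjS x hx h
    have h' : I₃ (s j) * (I₂ x)⁻¹ = g := by
      have h2 : I₃ (s j) = g * I₂ x := by
        rw [← h, mul_inv_cancel_left]
      rw [h2, mul_inv_cancel_right]
    by_cases hx2 : I₂ x = I₂ (pickS j).2.1
    · have hp := hpickS j hjS
      have heqp := heqn _ hp.1
      rw [hp.2] at heqp
      have h4 : g = I₁ (pickS j).1 := by
        rw [← h', hx2, ← heqp, mul_inv_cancel_right]
      exact hg₁ _ hp.1 h4
    · apply hgF
      refine Finset.mem_union.mpr (Or.inr ?_)
      refine Finset.mem_biUnion.mpr ⟨j, hjS, ?_⟩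
      exact Finset.mem_image.mpr ⟨I₂ x,
        Finset.mem_erase.mpr ⟨hx2, Finset.mem_image_of_mem _ hx⟩, h'⟩
  -- the greedy choice of fresh values
  set B := (C'.image I₂) ∪ (S'.image (fun z => g⁻¹ * I₃ z)) with hBdef
  set Fr := (Finset.Icc 1 ℓ) \ (C₁ ∪ S₁) with hFrdef
  have hdisj : Disjoint C₁ S₁ := by
    rw [Finset.disjoint_left]
    intro i hiC hiS
    exact hi i (hC₁sub hiC) ⟨(Finset.mem_filter.mp hiC).2, (Finset.mem_filter.mp hiS).2⟩
  have hFrcard : Fr.card + (C₁.card + S₁.card) = ℓ := by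
    have hsub : C₁ ∪ S₁ ⊆ Finset.Icc 1 ℓ := Finset.union_subset hC₁sub hS₁sub
    have h1 : Fr.card = ℓ - (C₁ ∪ S₁).card := by
      rw [hFrdef, Finset.card_sdiff_of_subset hsub, hIcc]
    have h2 : (C₁ ∪ S₁).card = C₁.card + S₁.card := Finset.card_union_of_disjoint hdisj
    have h3 : (C₁ ∪ S₁).card ≤ ℓ := by rw [← hIcc]; exact Finset.card_le_card hsub
    omega
  have hBcard : B.card ≤ C'.card + S'.card :=
    le_trans (Finset.card_union_le _ _) (Nat.add_le_add Finset.card_image_le Finset.card_image_le)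
  have hkey : Fr.card ≤ (Finset.univ \ B).card := by
    rw [Finset.card_sdiff_of_subset (Finset.subset_univ B), Finset.card_univ, hG]
    omega
  obtain ⟨y, hyInj, hyB⟩ := exists_injOn_finset Fr (Finset.univ \ B) hkey 1
  have hy' : ∀ i ∈ Fr, y i ∉ B := fun i hi' => (Finset.mem_sdiff.mp (hyB i hi')).2
  have hFrmem : ∀ i ∈ Finset.Icc 1 ℓ, c i ∉ C' → s i ∉ S' → i ∈ Fr := by
    intro i hi' hc' hs'
    rw [hFrdef]
    refine Finset.mem_sdiff.mpr ⟨hi', ?_⟩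
    intro hmem
    rcases Finset.mem_union.mp hmem with h | h
    · exact hc' (Finset.mem_filter.mp h).2
    · exact hs' (Finset.mem_filter.mp h).2
  -- the extended maps
  set cv : ℕ → G := fun i => if i ∈ S₁ then g⁻¹ * I₃ (s i) else y i with hcvdef
  set J₂ : ℕ → G := fun x => if x ∈ C' then I₂ x else
      if h : ((Finset.Icc 1 ℓ).filter (fun j => c j = x)).Nonempty
      then cv (((Finset.Icc 1 ℓ).filter (fun j => c j = x)).min' h) else 1 with hJ₂def
  set J₃ : ℕ → G := fun x => if x ∈ S' then I₃ x else
      if h : ((Finset.Icc 1 ℓ).filter (fun j => s j = x)).Nonempty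
      then g * J₂ (c (((Finset.Icc 1 ℓ).filter (fun j => s j = x)).min' h)) else 1 with hJ₃def
  set J₁ : ℕ → G := fun x => if x = r then g else I₁ x with hJ₁def
  -- evaluation lemmas
  have hJ₁r : J₁ r = g := by rw [hJ₁def]; simp
  have hJ₁not : ∀ x, x ≠ r → J₁ x = I₁ x := by
    intro x hx; rw [hJ₁def]; simp [hx]
  have hJ₂old : ∀ x ∈ C', J₂ x = I₂ x := by
    intro x hx; rw [hJ₂def]; simp [hx]
  have hJ₂new : ∀ i ∈ Finset.Icc 1 ℓ, c i ∉ C' → J₂ (c i) = cv i := by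
    intro i hi' hnc
    have hne2 : ((Finset.Icc 1 ℓ).filter (fun j => c j = c i)).Nonempty :=
      ⟨i, Finset.mem_filter.mpr ⟨hi', rfl⟩⟩
    have hmin : ((Finset.Icc 1 ℓ).filter (fun j => c j = c i)).min' hne2 = i := by
      have hm := Finset.min'_mem _ hne2
      rw [Finset.mem_filter] at hm
      exact hc (Finset.mem_coe.mpr hm.1) (Finset.mem_coe.mpr hi') hm.2
    rw [hJ₂def]
    simp only
    rw [if_neg hnc, dif_pos hne2, hmin]
  have hJ₃old : ∀ x ∈ S', J₃ x = I₃ x := by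
    intro x hx; rw [hJ₃def]; simp [hx]
  have hJ₃new : ∀ i ∈ Finset.Icc 1 ℓ, s i ∉ S' → J₃ (s i) = g * J₂ (c i) := by
    intro i hi' hns
    have hne2 : ((Finset.Icc 1 ℓ).filter (fun j => s j = s i)).Nonempty :=
      ⟨i, Finset.mem_filter.mpr ⟨hi', rfl⟩⟩
    have hmin : ((Finset.Icc 1 ℓ).filter (fun j => s j = s i)).min' hne2 = i := by
      have hm := Finset.min'_mem _ hne2
      rw [Finset.mem_filter] at hm
      exact hs (Finset.mem_coe.mpr hm.1) (Finset.mem_coe.mpr hi') hm.2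
    rw [hJ₃def]
    simp only
    rw [if_neg hns, dif_pos hne2, hmin]
  -- key distinctness facts for new column values
  have hcvC : ∀ i ∈ Finset.Icc 1 ℓ, c i ∉ C' → ∀ x ∈ C', cv i ≠ I₂ x := by
    intro i hi' hnc x hx
    by_cases hiS : i ∈ S₁
    · rw [hcvdef]; simp only [if_pos hiS]
      exact hg₃ i hiS x hx
    · have hiF : i ∈ Fr := hFrmem i hi' hnc (fun h => hiS (Finset.mem_filter.mpr ⟨hi', h⟩))
      rw [hcvdef]; simp only [if_neg hiS]
      intro h
      exact hy' i hiF (Finset.mem_union.mpr (Or.inl (h ▸ Finset.mem_image_of_mem _ hx)))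
  have hcvInj : ∀ i ∈ Finset.Icc 1 ℓ, c i ∉ C' → ∀ j ∈ Finset.Icc 1 ℓ, c j ∉ C' →
      cv i = cv j → i = j := by
    intro i hi' hci j hj' hcj h
    by_cases hiS : i ∈ S₁ <;> by_cases hjS : j ∈ S₁
    · rw [hcvdef] at h; simp only [if_pos hiS, if_pos hjS] at h
      have h2 : I₃ (s i) = I₃ (s j) := mul_left_cancel h
      have h3 : s i = s j :=
        injS _ (Finset.mem_filter.mp hiS).2 _ (Finset.mem_filter.mp hjS).2 h2
      exact hs (Finset.mem_coe.mpr hi') (Finset.mem_coe.mpr hj') h3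
    · have hjF : j ∈ Fr := hFrmem j hj' hcj (fun hh => hjS (Finset.mem_filter.mpr ⟨hj', hh⟩))
      rw [hcvdef] at h; simp only [if_pos hiS, if_neg hjS] at h
      exfalso
      apply hy' j hjF
      refine Finset.mem_union.mpr (Or.inr ?_)
      exact Finset.mem_image.mpr ⟨s i, (Finset.mem_filter.mp hiS).2, h⟩
    · have hiF : i ∈ Fr := hFrmem i hi' hci (fun hh => hiS (Finset.mem_filter.mpr ⟨hi', hh⟩))
      rw [hcvdef] at h; simp only [if_neg hiS, if_pos hjS] at h
      exfalso
      apply hy' i hiF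
      refine Finset.mem_union.mpr (Or.inr ?_)
      exact Finset.mem_image.mpr ⟨s j, (Finset.mem_filter.mp hjS).2, h.symm⟩
    · have hiF : i ∈ Fr := hFrmem i hi' hci (fun hh => hiS (Finset.mem_filter.mpr ⟨hi', hh⟩))
      have hjF : j ∈ Fr := hFrmem j hj' hcj (fun hh => hjS (Finset.mem_filter.mpr ⟨hj', hh⟩))
      rw [hcvdef] at h; simp only [if_neg hiS, if_neg hjS] at h
      exact hyInj (Finset.mem_coe.mpr hiF) (Finset.mem_coe.mpr hjF) h
  -- key distinctness facts for new symbol values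
  have hsvS : ∀ i ∈ Finset.Icc 1 ℓ, s i ∉ S' → ∀ x ∈ S', g * J₂ (c i) ≠ I₃ x := by
    intro i hi' hns x hx
    by_cases hci : c i ∈ C'
    · rw [hJ₂old _ hci]
      exact hg₂ i (Finset.mem_filter.mpr ⟨hi', hci⟩) x hx
    · have hiF : i ∈ Fr := hFrmem i hi' hci hns
      have hiS : i ∉ S₁ := fun hh => hns (Finset.mem_filter.mp hh).2
      rw [hJ₂new i hi' hci, hcvdef]
      simp only [if_neg hiS]
      intro h
      apply hy' i hiF
      refine Finset.mem_union.mpr (Or.inr ?_)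
      refine Finset.mem_image.mpr ⟨x, hx, ?_⟩
      rw [← h, inv_mul_cancel_left]
  have hsvInj : ∀ i ∈ Finset.Icc 1 ℓ, s i ∉ S' → ∀ j ∈ Finset.Icc 1 ℓ, s j ∉ S' →
      g * J₂ (c i) = g * J₂ (c j) → i = j := by
    intro i hi' hsi j hj' hsj h
    have h0 : J₂ (c i) = J₂ (c j) := mul_left_cancel h
    by_cases hci : c i ∈ C' <;> by_cases hcj : c j ∈ C'
    · rw [hJ₂old _ hci, hJ₂old _ hcj] at h0
      have h2 : c i = c j := injC _ hci _ hcj h0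
      exact hc (Finset.mem_coe.mpr hi') (Finset.mem_coe.mpr hj') h2
    · rw [hJ₂old _ hci, hJ₂new j hj' hcj] at h0
      exact absurd h0.symm (hcvC j hj' hcj _ hci)
    · rw [hJ₂new i hi' hci, hJ₂old _ hcj] at h0
      exact absurd h0 (hcvC i hi' hci _ hcj)
    · rw [hJ₂new i hi' hci, hJ₂new j hj' hcj] at h0
      exact hcvInj i hi' hci j hj' hcj h0
  -- classification of rows / columns / symbols of P
  have hrowsP : ∀ x ∈ rowsOf P, x = r ∨ x ∈ R' := by
    intro x hx
    obtain ⟨t, ht, rfl⟩ := hx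
    rcases hsplit' t ht with h | ⟨i, hi', rfl⟩
    · exact Or.inr (Finset.mem_image.mpr ⟨t, h, rfl⟩)
    · left; rfl
  have hcolsP : ∀ x ∈ colsOf P, x ∈ C' ∨ ∃ i ∈ Finset.Icc 1 ℓ, x = c i ∧ c i ∉ C' := by
    intro x hx
    obtain ⟨t, ht, rfl⟩ := hx
    rcases hsplit' t ht with h | ⟨i, hi', rfl⟩
    · exact Or.inl (Finset.mem_image.mpr ⟨t, h, rfl⟩)
    · by_cases hci : c i ∈ C'
      · exact Or.inl hci
      · exact Or.inr ⟨i, hi', rfl, hci⟩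
  have hsymsP : ∀ x ∈ symsOf P, x ∈ S' ∨ ∃ i ∈ Finset.Icc 1 ℓ, x = s i ∧ s i ∉ S' := by
    intro x hx
    obtain ⟨t, ht, rfl⟩ := hx
    rcases hsplit' t ht with h | ⟨i, hi', rfl⟩
    · exact Or.inl (Finset.mem_image.mpr ⟨t, h, rfl⟩)
    · by_cases hsi : s i ∈ S'
      · exact Or.inl hsi
      · exact Or.inr ⟨i, hi', rfl, hsi⟩
  have hR'ne : ∀ x ∈ R', x ≠ r := by
    intro x hx
    obtain ⟨t, ht, rfl⟩ := Finset.mem_image.mp hx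
    exact hP'r t ht
  refine ⟨J₁, J₂, J₃, ?_, ?_, ?_, ?_⟩
  · -- rows injective
    intro a ha b hb hab
    rcases hrowsP a ha with rfl | haR <;> rcases hrowsP b hb with rfl | hbR
    · rfl
    · exfalso
      rw [hJ₁r, hJ₁not b (hR'ne b hbR)] at hab
      obtain ⟨t, ht, rfl⟩ := Finset.mem_image.mp hbR
      exact hg₁ t ht hab
    · exfalso
      rw [hJ₁r, hJ₁not a (hR'ne a haR)] at hab
      obtain ⟨t, ht, rfl⟩ := Finset.mem_image.mp haR
      exact hg₁ t ht hab.symm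
    · rw [hJ₁not a (hR'ne a haR), hJ₁not b (hR'ne b hbR)] at hab
      obtain ⟨t, ht, rfl⟩ := Finset.mem_image.mp haR
      obtain ⟨u, hu, rfl⟩ := Finset.mem_image.mp hbR
      exact injR t ht u hu hab
  · -- columns injective
    intro a ha b hb hab
    rcases hcolsP a ha with haC | ⟨i, hi', rfl, hci⟩ <;>
      rcases hcolsP b hb with hbC | ⟨j, hj', rfl, hcj⟩
    · rw [hJ₂old _ haC, hJ₂old _ hbC] at hab
      exact injC _ haC _ hbC hab
    · rw [hJ₂old _ haC, hJ₂new j hj' hcj] at hab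
      exact absurd hab.symm (hcvC j hj' hcj _ haC)
    · rw [hJ₂new i hi' hci, hJ₂old _ hbC] at hab
      exact absurd hab (hcvC i hi' hci _ hbC)
    · rw [hJ₂new i hi' hci, hJ₂new j hj' hcj] at hab
      rw [hcvInj i hi' hci j hj' hcj hab]
  · -- symbols injective
    intro a ha b hb hab
    rcases hsymsP a ha with haS | ⟨i, hi', rfl, hsi⟩ <;>
      rcases hsymsP b hb with hbS | ⟨j, hj', rfl, hsj⟩
    · rw [hJ₃old _ haS, hJ₃old _ hbS] at hab
      exact injS _ haS _ hbS hab
    · rw [hJ₃old _ haS, hJ₃new j hj' hsj] at hab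
      exact absurd hab.symm (hsvS j hj' hsj _ haS)
    · rw [hJ₃new i hi' hsi, hJ₃old _ hbS] at hab
      exact absurd hab (hsvS i hi' hsi _ hbS)
    · rw [hJ₃new i hi' hsi, hJ₃new j hj' hsj] at hab
      rw [hsvInj i hi' hsi j hj' hsj hab]
  · -- the equations
    intro t ht
    rcases hsplit' t ht with h | ⟨i, hi', rfl⟩
    · rw [hJ₁not t.1 (hP'r t h), hJ₂old _ (Finset.mem_image.mpr ⟨t, h, rfl⟩),
        hJ₃old _ (Finset.mem_image.mpr ⟨t, h, rfl⟩)]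
      exact heqn t h
    · show J₁ r * J₂ (c i) = J₃ (s i)
      rw [hJ₁r]
      by_cases hsi : s i ∈ S'
      · have hiS : i ∈ S₁ := Finset.mem_filter.mpr ⟨hi', hsi⟩
        have hci : c i ∉ C' := fun h => hi i hi' ⟨h, hsi⟩
        rw [hJ₃old _ hsi, hJ₂new i hi' hci, hcvdef]
        simp only [if_pos hiS]
        exact mul_inv_cancel_left g _
      · rw [hJ₃new i hi' hsi]
end

section
/- Let G be a group and let P and P' be PLS in the same species; that is, P' is obtained from P by applying injective relabelling maps separately to the rows, to the columns and to the symbols of P, and then applying a fixed permutation of the three coordinates uniformly to every triple. Then P embeds in G if and only if P' embeds in G. -/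
/-- Apply the coordinate permutation `σ` uniformly to a triple. -/
def permTriple (σ : Equiv.Perm (Fin 3)) (t : ℕ × ℕ × ℕ) : ℕ × ℕ × ℕ :=
  (![t.1, t.2.1, t.2.2] (σ 0), ![t.1, t.2.1, t.2.2] (σ 1), ![t.1, t.2.1, t.2.2] (σ 2))

section Aux

variable {G : Type*} [Group G]

lemma injOn_inv {I : ℕ → G} {S : Set ℕ} (hI : Set.InjOn I S) :
    Set.InjOn (fun x => (I x)⁻¹) S :=
  fun a ha b hb e => hI ha hb (inv_injective e)

lemma invFun_comp_injOn {S : Set ℕ} {f : ℕ → ℕ} (hf : Set.InjOn f S)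
    {I : ℕ → G} (hI : Set.InjOn I S) {T : Set ℕ} (hT : T ⊆ f '' S) :
    Set.InjOn (fun x => I (Function.invFunOn f S x)) T := by
  intro x hx y hy hxy
  obtain ⟨a, ha, rfl⟩ := hT hx
  obtain ⟨b, hb, rfl⟩ := hT hy
  have hxy' : I (Function.invFunOn f S (f a)) = I (Function.invFunOn f S (f b)) := hxy
  rw [hf.leftInvOn_invFunOn ha, hf.leftInvOn_invFunOn hb] at hxy'
  exact congrArg f (hI ha hb hxy')

/-- Pure relabelling preserves embeddability (both directions). -/
lemma relabel_iff (P : Finset (ℕ × ℕ × ℕ)) (f g h : ℕ → ℕ)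
    (hf : Set.InjOn f (rowsOf P)) (hg : Set.InjOn g (colsOf P))
    (hh : Set.InjOn h (symsOf P)) :
    EmbedsIn P G ↔ EmbedsIn (P.image fun t => (f t.1, g t.2.1, h t.2.2)) G := by
  constructor
  · rintro ⟨I₁, I₂, I₃, h₁, h₂, h₃, heq⟩
    refine ⟨fun x => I₁ (Function.invFunOn f (rowsOf P) x),
            fun x => I₂ (Function.invFunOn g (colsOf P) x),
            fun x => I₃ (Function.invFunOn h (symsOf P) x),
            invFun_comp_injOn hf h₁ ?_, invFun_comp_injOn hg h₂ ?_,
            invFun_comp_injOn hh h₃ ?_, ?_⟩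
    · rintro x ⟨t', ht', rfl⟩
      obtain ⟨t, ht, rfl⟩ := Finset.mem_image.1 ht'
      exact ⟨t.1, ⟨t, ht, rfl⟩, rfl⟩
    · rintro x ⟨t', ht', rfl⟩
      obtain ⟨t, ht, rfl⟩ := Finset.mem_image.1 ht'
      exact ⟨t.2.1, ⟨t, ht, rfl⟩, rfl⟩
    · rintro x ⟨t', ht', rfl⟩
      obtain ⟨t, ht, rfl⟩ := Finset.mem_image.1 ht'
      exact ⟨t.2.2, ⟨t, ht, rfl⟩, rfl⟩
    · rintro t' ht'
      obtain ⟨t, ht, rfl⟩ := Finset.mem_image.1 ht'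
      show I₁ (Function.invFunOn f (rowsOf P) (f t.1)) *
        I₂ (Function.invFunOn g (colsOf P) (g t.2.1)) =
        I₃ (Function.invFunOn h (symsOf P) (h t.2.2))
      rw [hf.leftInvOn_invFunOn ⟨t, ht, rfl⟩, hg.leftInvOn_invFunOn ⟨t, ht, rfl⟩,
        hh.leftInvOn_invFunOn ⟨t, ht, rfl⟩]
      exact heq t ht
  · rintro ⟨J₁, J₂, J₃, h₁, h₂, h₃, heq⟩
    refine ⟨fun a => J₁ (f a), fun b => J₂ (g b), fun c => J₃ (h c), ?_, ?_, ?_, ?_⟩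
    · intro a ha b hb e
      obtain ⟨t, ht, rfl⟩ := ha
      obtain ⟨s, hs, rfl⟩ := hb
      refine hf ⟨t, ht, rfl⟩ ⟨s, hs, rfl⟩ (h₁ ?_ ?_ e)
      · exact ⟨_, Finset.mem_image_of_mem _ ht, rfl⟩
      · exact ⟨_, Finset.mem_image_of_mem _ hs, rfl⟩
    · intro a ha b hb e
      obtain ⟨t, ht, rfl⟩ := ha
      obtain ⟨s, hs, rfl⟩ := hb
      refine hg ⟨t, ht, rfl⟩ ⟨s, hs, rfl⟩ (h₂ ?_ ?_ e)
      · exact ⟨_, Finset.mem_image_of_mem _ ht, rfl⟩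
      · exact ⟨_, Finset.mem_image_of_mem _ hs, rfl⟩
    · intro a ha b hb e
      obtain ⟨t, ht, rfl⟩ := ha
      obtain ⟨s, hs, rfl⟩ := hb
      refine hh ⟨t, ht, rfl⟩ ⟨s, hs, rfl⟩ (h₃ ?_ ?_ e)
      · exact ⟨_, Finset.mem_image_of_mem _ ht, rfl⟩
      · exact ⟨_, Finset.mem_image_of_mem _ hs, rfl⟩
    · intro t ht
      exact heq _ (Finset.mem_image_of_mem _ ht)

/-- (b, a, c) conjugate. -/
lemma embeds_bac (P : Finset (ℕ × ℕ × ℕ)) (hE : EmbedsIn P G) :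
    EmbedsIn (P.image fun t => (t.2.1, t.1, t.2.2)) G := by
  obtain ⟨I₁, I₂, I₃, h₁, h₂, h₃, heq⟩ := hE
  refine ⟨fun x => (I₂ x)⁻¹, fun x => (I₁ x)⁻¹, fun x => (I₃ x)⁻¹,
    (injOn_inv h₂).mono ?_, (injOn_inv h₁).mono ?_, (injOn_inv h₃).mono ?_, ?_⟩
  · rintro x ⟨t', ht', rfl⟩
    obtain ⟨t, ht, rfl⟩ := Finset.mem_image.1 ht'
    exact ⟨t, ht, rfl⟩
  · rintro x ⟨t', ht', rfl⟩
    obtain ⟨t, ht, rfl⟩ := Finset.mem_image.1 ht'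
    exact ⟨t, ht, rfl⟩
  · rintro x ⟨t', ht', rfl⟩
    obtain ⟨t, ht, rfl⟩ := Finset.mem_image.1 ht'
    exact ⟨t, ht, rfl⟩
  · rintro t' ht'
    obtain ⟨t, ht, rfl⟩ := Finset.mem_image.1 ht'
    show (I₂ t.2.1)⁻¹ * (I₁ t.1)⁻¹ = (I₃ t.2.2)⁻¹
    rw [← heq t ht]; group

/-- (c, b, a) conjugate. -/
lemma embeds_cba (P : Finset (ℕ × ℕ × ℕ)) (hE : EmbedsIn P G) :
    EmbedsIn (P.image fun t => (t.2.2, t.2.1, t.1)) G := by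
  obtain ⟨I₁, I₂, I₃, h₁, h₂, h₃, heq⟩ := hE
  refine ⟨I₃, fun x => (I₂ x)⁻¹, I₁,
    h₃.mono ?_, (injOn_inv h₂).mono ?_, h₁.mono ?_, ?_⟩
  · rintro x ⟨t', ht', rfl⟩
    obtain ⟨t, ht, rfl⟩ := Finset.mem_image.1 ht'
    exact ⟨t, ht, rfl⟩
  · rintro x ⟨t', ht', rfl⟩
    obtain ⟨t, ht, rfl⟩ := Finset.mem_image.1 ht'
    exact ⟨t, ht, rfl⟩
  · rintro x ⟨t', ht', rfl⟩
    obtain ⟨t, ht, rfl⟩ := Finset.mem_image.1 ht'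
    exact ⟨t, ht, rfl⟩
  · rintro t' ht'
    obtain ⟨t, ht, rfl⟩ := Finset.mem_image.1 ht'
    show I₃ t.2.2 * (I₂ t.2.1)⁻¹ = I₁ t.1
    rw [← heq t ht]; group

/-- (a, c, b) conjugate. -/
lemma embeds_acb (P : Finset (ℕ × ℕ × ℕ)) (hE : EmbedsIn P G) :
    EmbedsIn (P.image fun t => (t.1, t.2.2, t.2.1)) G := by
  obtain ⟨I₁, I₂, I₃, h₁, h₂, h₃, heq⟩ := hE
  refine ⟨fun x => (I₁ x)⁻¹, I₃, I₂,
    (injOn_inv h₁).mono ?_, h₃.mono ?_, h₂.mono ?_, ?_⟩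
  · rintro x ⟨t', ht', rfl⟩
    obtain ⟨t, ht, rfl⟩ := Finset.mem_image.1 ht'
    exact ⟨t, ht, rfl⟩
  · rintro x ⟨t', ht', rfl⟩
    obtain ⟨t, ht, rfl⟩ := Finset.mem_image.1 ht'
    exact ⟨t, ht, rfl⟩
  · rintro x ⟨t', ht', rfl⟩
    obtain ⟨t, ht, rfl⟩ := Finset.mem_image.1 ht'
    exact ⟨t, ht, rfl⟩
  · rintro t' ht'
    obtain ⟨t, ht, rfl⟩ := Finset.mem_image.1 ht'
    show (I₁ t.1)⁻¹ * I₃ t.2.2 = I₂ t.2.1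
    rw [← heq t ht]; group

/-- (c, a, b) conjugate. -/
lemma embeds_cab (P : Finset (ℕ × ℕ × ℕ)) (hE : EmbedsIn P G) :
    EmbedsIn (P.image fun t => (t.2.2, t.1, t.2.1)) G := by
  obtain ⟨I₁, I₂, I₃, h₁, h₂, h₃, heq⟩ := hE
  refine ⟨fun x => (I₃ x)⁻¹, I₁, fun x => (I₂ x)⁻¹,
    (injOn_inv h₃).mono ?_, h₁.mono ?_, (injOn_inv h₂).mono ?_, ?_⟩
  · rintro x ⟨t', ht', rfl⟩
    obtain ⟨t, ht, rfl⟩ := Finset.mem_image.1 ht'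
    exact ⟨t, ht, rfl⟩
  · rintro x ⟨t', ht', rfl⟩
    obtain ⟨t, ht, rfl⟩ := Finset.mem_image.1 ht'
    exact ⟨t, ht, rfl⟩
  · rintro x ⟨t', ht', rfl⟩
    obtain ⟨t, ht, rfl⟩ := Finset.mem_image.1 ht'
    exact ⟨t, ht, rfl⟩
  · rintro t' ht'
    obtain ⟨t, ht, rfl⟩ := Finset.mem_image.1 ht'
    show (I₃ t.2.2)⁻¹ * I₁ t.1 = (I₂ t.2.1)⁻¹
    rw [← heq t ht]; group

/-- (b, c, a) conjugate. -/
lemma embeds_bca (P : Finset (ℕ × ℕ × ℕ)) (hE : EmbedsIn P G) :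
    EmbedsIn (P.image fun t => (t.2.1, t.2.2, t.1)) G := by
  obtain ⟨I₁, I₂, I₃, h₁, h₂, h₃, heq⟩ := hE
  refine ⟨I₂, fun x => (I₃ x)⁻¹, fun x => (I₁ x)⁻¹,
    h₂.mono ?_, (injOn_inv h₃).mono ?_, (injOn_inv h₁).mono ?_, ?_⟩
  · rintro x ⟨t', ht', rfl⟩
    obtain ⟨t, ht, rfl⟩ := Finset.mem_image.1 ht'
    exact ⟨t, ht, rfl⟩
  · rintro x ⟨t', ht', rfl⟩
    obtain ⟨t, ht, rfl⟩ := Finset.mem_image.1 ht'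
    exact ⟨t, ht, rfl⟩
  · rintro x ⟨t', ht', rfl⟩
    obtain ⟨t, ht, rfl⟩ := Finset.mem_image.1 ht'
    exact ⟨t, ht, rfl⟩
  · rintro t' ht'
    obtain ⟨t, ht, rfl⟩ := Finset.mem_image.1 ht'
    show I₂ t.2.1 * (I₃ t.2.2)⁻¹ = (I₁ t.1)⁻¹
    rw [← heq t ht]; group

end Aux

/-- Species invariance: if `P'` is obtained from `P` by injectively relabelling
rows, columns and symbols and uniformly permuting the three coordinates, then
`P` embeds in a group `G` iff `P'` does. -/
theorem species_invariant (G : Type*) [Group G] (P P' : Finset (ℕ × ℕ × ℕ))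
    (hP : IsPLS P) (hP' : IsPLS P')
    (f g h : ℕ → ℕ)
    (hf : Set.InjOn f (rowsOf P)) (hg : Set.InjOn g (colsOf P))
    (hh : Set.InjOn h (symsOf P))
    (σ : Equiv.Perm (Fin 3))
    (him : P' = P.image fun t => permTriple σ (f t.1, g t.2.1, h t.2.2)) :
    EmbedsIn P G ↔ EmbedsIn P' G := by
  set Q : Finset (ℕ × ℕ × ℕ) := P.image (fun t => (f t.1, g t.2.1, h t.2.2)) with hQ
  have h1 : EmbedsIn P G ↔ EmbedsIn Q G := relabel_iff P f g h hf hg hh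
  have him' : P' = Q.image (permTriple σ) := by
    rw [him, hQ, Finset.image_image]
    rfl
  rw [h1, him']
  have henum := (by decide :
      ∀ τ : Equiv.Perm (Fin 3), τ = 1 ∨ τ = Equiv.swap 0 1 ∨ τ = Equiv.swap 0 2 ∨
        τ = Equiv.swap 1 2 ∨ τ = Equiv.swap 0 1 * Equiv.swap 0 2 ∨
        τ = Equiv.swap 0 2 * Equiv.swap 0 1) σ
  rcases henum with rfl | rfl | rfl | rfl | rfl | rfl
  · rw [show permTriple 1 = id from funext fun t => rfl, Finset.image_id]
  · rw [show permTriple (Equiv.swap 0 1) = fun t => (t.2.1, t.1, t.2.2) from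
      funext fun t => rfl]
    constructor
    · exact embeds_bac Q
    · intro hE
      have := embeds_bac _ hE
      rwa [Finset.image_image,
        show ((fun t : ℕ × ℕ × ℕ => (t.2.1, t.1, t.2.2)) ∘
          (fun t : ℕ × ℕ × ℕ => (t.2.1, t.1, t.2.2))) = id from funext fun t => rfl,
        Finset.image_id] at this
  · rw [show permTriple (Equiv.swap 0 2) = fun t => (t.2.2, t.2.1, t.1) from
      funext fun t => rfl]
    constructor
    · exact embeds_cba Q
    · intro hE
      have := embeds_cba _ hE
      rwa [Finset.image_image,
        show ((fun t : ℕ × ℕ × ℕ => (t.2.2, t.2.1, t.1)) ∘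
          (fun t : ℕ × ℕ × ℕ => (t.2.2, t.2.1, t.1))) = id from funext fun t => rfl,
        Finset.image_id] at this
  · rw [show permTriple (Equiv.swap 1 2) = fun t => (t.1, t.2.2, t.2.1) from
      funext fun t => rfl]
    constructor
    · exact embeds_acb Q
    · intro hE
      have := embeds_acb _ hE
      rwa [Finset.image_image,
        show ((fun t : ℕ × ℕ × ℕ => (t.1, t.2.2, t.2.1)) ∘
          (fun t : ℕ × ℕ × ℕ => (t.1, t.2.2, t.2.1))) = id from funext fun t => rfl,
        Finset.image_id] at this
  · rw [show permTriple (Equiv.swap 0 1 * Equiv.swap 0 2) =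
      fun t => (t.2.2, t.1, t.2.1) from funext fun t => rfl]
    constructor
    · exact embeds_cab Q
    · intro hE
      have := embeds_bca _ hE
      rwa [Finset.image_image,
        show ((fun t : ℕ × ℕ × ℕ => (t.2.1, t.2.2, t.1)) ∘
          (fun t : ℕ × ℕ × ℕ => (t.2.2, t.1, t.2.1))) = id from funext fun t => rfl,
        Finset.image_id] at this
  · rw [show permTriple (Equiv.swap 0 2 * Equiv.swap 0 1) =
      fun t => (t.2.1, t.2.2, t.1) from funext fun t => rfl]
    constructor
    · exact embeds_bca Q
    · intro hE
      have := embeds_cab _ hE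
      rwa [Finset.image_image,
        show ((fun t : ℕ × ℕ × ℕ => (t.2.2, t.1, t.2.1)) ∘
          (fun t : ℕ × ℕ × ℕ => (t.2.1, t.2.2, t.1))) = id from funext fun t => rfl,
        Finset.image_id] at this
end

section
/- Let a, b, c be three distinct symbols and let P be the PLS of size 6 with triples (1,1,a), (1,6,c), (2,2,a), (2,5,b), (3,3,b), (3,4,c). Then P does not embed into any group of order 6. -/
private lemma key {G : Type*} [Group G] [Fintype G] (hG : Fintype.card G = 6)
    (v w B C : G) (hv : v ≠ 1) (hw : w ≠ 1) (hvw : v ≠ w)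
    (hB : B ≠ 1) (hC : C ≠ 1) (hBC : B ≠ C)
    (d13 : (1:G) ≠ v*B) (d14 : (1:G) ≠ w*B) (d15 : (1:G) ≠ C) (d16 : (1:G) ≠ w*C)
    (d23 : v ≠ v*B) (d24 : v ≠ w*B) (d25 : v ≠ C) (d26 : v ≠ w*C)
    (d34 : v*B ≠ w*B) (d35 : v*B ≠ C) (d36 : v*B ≠ w*C)
    (d45 : w*B ≠ C) (d46 : w*B ≠ w*C) (d56 : C ≠ w*C) : False := by
  classical
  have h6 : ∀ g : G, g ^ 6 = 1 := fun g => by rw [← hG]; exact pow_card_eq_one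
  have d12 : (1:G) ≠ v := fun h => hv h.symm
  have hcard : ({1, v, v*B, w*B, C, w*C} : Finset G).card = 6 := by
    rw [Finset.card_insert_of_notMem (by simp [d12, d13, d14, d15, d16]),
        Finset.card_insert_of_notMem (by simp [d23, d24, d25, d26]),
        Finset.card_insert_of_notMem (by simp [d34, d35, d36]),
        Finset.card_insert_of_notMem (by simp [d45, d46]),
        Finset.card_insert_of_notMem (by simp [d56]),
        Finset.card_singleton]
  have huniv : ({1, v, v*B, w*B, C, w*C} : Finset G) = Finset.univ :=
    Finset.eq_univ_of_card _ (by rw [hcard, hG])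
  have hu : ∀ x : G, x = 1 ∨ x = v ∨ x = v*B ∨ x = w*B ∨ x = C ∨ x = w*C := by
    intro x
    have hx := Finset.mem_univ x
    rw [← huniv] at hx
    simpa using hx
  rcases hu w with h1 | h1 | h1 | h1 | h1 | h1
  · exact hw h1
  · exact hvw h1.symm
  · -- X1 : w = v*B
    rcases hu B with h2 | h2 | h2 | h2 | h2 | h2
    · exact hB h2
    · -- Y1 : B = v
      rcases hu (v*C) with h3 | h3 | h3 | h3 | h3 | h3
      · -- v*C = 1
        apply d26
        rw [h1, h2, mul_assoc, h3, mul_one]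
      · exact hC (mul_eq_left.mp h3)
      · exact hBC (mul_left_cancel h3).symm
      · -- v*C = w*B
        rw [h1, h2] at h3
        rw [mul_assoc] at h3
        have hC2 : C = v*v := mul_left_cancel h3
        exact d35 (by rw [h2]; exact hC2.symm)
      · exact hv (mul_eq_right.mp h3)
      · exact hvw (mul_right_cancel h3)
    · exact hv (mul_eq_right.mp h2.symm)
    · exact hw (mul_eq_right.mp h2.symm)
    · exact hBC h2
    · -- Y2 : B = w*C
      rcases hu (v*C) with h3 | h3 | h3 | h3 | h3 | h3
      · -- Z1 : v*C = 1
        have hC' : C = v⁻¹ := eq_inv_of_mul_eq_one_right h3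
        have hcomm : w * v = v * w := by
          have hw0 : w = v * (w * v⁻¹) := by rw [← hC', ← h2]; exact h1
          calc w * v = v * (w * v⁻¹) * v := by rw [← hw0]
          _ = v * w := by group
        rcases hu (v*w) with h4 | h4 | h4 | h4 | h4 | h4
        · -- v*w = 1
          apply d35
          rw [← h1, hC']
          exact eq_inv_of_mul_eq_one_right h4
        · exact hw (mul_eq_left.mp h4)
        · -- v*w = v*B
          have hwB : w = B := mul_left_cancel h4
          have : B = B * C := by rw [← hwB] at h2 ⊢; exact h2
          exact hC (left_eq_mul.mp this)
        · -- v*w = w*B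
          have hB' : B = w * v⁻¹ := by rw [h2, hC']
          rw [hB', ← hcomm] at h4
          have h5 : v = w * v⁻¹ := mul_left_cancel h4
          apply d26
          rw [hC']
          exact h5
        · -- v*w = C = v⁻¹
          rw [hC'] at h4
          have hw' : w = v⁻¹ * v⁻¹ :=
            mul_left_cancel (show v * w = v * (v⁻¹ * v⁻¹) by rw [h4]; group)
          apply d24
          have hB' : B = w * v⁻¹ := by rw [h2, hC']
          rw [hB', hw']
          have e : (v⁻¹*v⁻¹ : G) * (v⁻¹*v⁻¹*v⁻¹) = (v^5)⁻¹ := by group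
          rw [e, eq_inv_iff_mul_eq_one]
          calc v * v^5 = v^6 := by group
          _ = 1 := h6 v
        · -- v*w = w*C
          rw [hC', ← hcomm] at h4
          have h5 : v = v⁻¹ := mul_left_cancel h4
          exact d25 (by rw [hC', ← h5])
      · exact hC (mul_eq_left.mp h3)
      · exact hBC (mul_left_cancel h3).symm
      · -- Z2 : v*C = w*B
        rw [h1] at h3
        rw [mul_assoc] at h3
        have hC2 : C = B * B := mul_left_cancel h3
        rw [h1, hC2] at h2
        have h7 : (1:G) * B = (v*B*B) * B := by
          calc (1:G)*B = B := one_mul B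
          _ = v*B*(B*B) := h2
          _ = (v*B*B)*B := by group
        have h8 : (1:G) = v*B*B := mul_right_cancel h7
        exact d14 (by rw [h1]; exact h8)
      · exact hv (mul_eq_right.mp h3)
      · exact hvw (mul_right_cancel h3)
  · -- w = w*B
    exact hB (left_eq_mul.mp h1)
  · -- X2 : w = C
    rcases hu B with h2 | h2 | h2 | h2 | h2 | h2
    · exact hB h2
    · -- Y1 : B = v
      rcases hu (v*C) with h3 | h3 | h3 | h3 | h3 | h3
      · -- Z1 : v*C = 1
        apply d14
        rw [h2, h1, eq_inv_of_mul_eq_one_right h3]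
        group
      · exact hC (mul_eq_left.mp h3)
      · exact hBC (mul_left_cancel h3).symm
      · -- Z2 : v*C = w*B
        rcases hu (w*(v*v)) with h4 | h4 | h4 | h4 | h4 | h4
        · -- w*(v*v) = 1
          have hw' : w = (v*v)⁻¹ := eq_inv_of_mul_eq_one_left h4
          apply d36
          rw [h2, ← h1, hw']
          have e : ((v*v)⁻¹ : G) * (v*v)⁻¹ = (v^4)⁻¹ := by group
          rw [e, eq_inv_iff_mul_eq_one]
          calc v*v*v^4 = v^6 := by group
          _ = 1 := h6 v
        · -- w*(v*v) = v
          rw [← mul_assoc] at h4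
          have h5 : (w*v)*v = 1*v := by rw [one_mul]; exact h4
          have h5' : w*v = 1 := mul_right_cancel h5
          exact d14 (by rw [h2]; exact h5'.symm)
        · -- w*(v*v) = v*B = v*v
          rw [h2] at h4
          have : w * (v*v) = 1 * (v*v) := by rw [one_mul]; exact h4
          exact hw (mul_right_cancel this)
        · -- w*(v*v) = w*B = w*v
          rw [h2] at h4
          have h5 : v*v = v := mul_left_cancel h4
          exact hv (mul_eq_right.mp h5)
        · -- w*(v*v) = C = w
          rw [← h1] at h4
          have h5 : v*v = 1 := mul_left_cancel (h4.trans (mul_one w).symm)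
          exact d13 (by rw [h2]; exact h5.symm)
        · -- w*(v*v) = w*C = w*w
          rw [← h1] at h4
          have h5 : v*v = w := mul_left_cancel h4
          exact d35 (by rw [h2, ← h1]; exact h5)
      · exact hv (mul_eq_right.mp h3)
      · exact hvw (mul_right_cancel h3)
    · exact hv (mul_eq_right.mp h2.symm)
    · exact hw (mul_eq_right.mp h2.symm)
    · exact hBC h2
    · -- Y2 : B = w*C
      rcases hu (v*C) with h3 | h3 | h3 | h3 | h3 | h3
      · -- Z1 : v*C = 1
        have hC' : C = v⁻¹ := eq_inv_of_mul_eq_one_right h3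
        apply d35
        rw [h2, h1, hC']
        group
      · exact hC (mul_eq_left.mp h3)
      · exact hBC (mul_left_cancel h3).symm
      · -- Z2 : v*C = w*B
        rw [h2, h1] at h3
        have h5 : v * C = (C*C) * C := by rw [h3]; group
        have h6' : v = C*C := mul_right_cancel h5
        exact d26 (by rw [h1]; exact h6')
      · exact hv (mul_eq_right.mp h3)
      · exact hvw (mul_right_cancel h3)
  · -- w = w*C
    exact hC (left_eq_mul.mp h1)

/-- The PLS \eqref{e:interesting} does not embed in any group of order 6. -/
theorem interesting_not_in_order_six (a b c : ℕ)
    (hab : a ≠ b) (hac : a ≠ c) (hbc : b ≠ c)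
    (G : Type*) [Group G] [Fintype G] (hG : Fintype.card G = 6) :
    ¬ EmbedsIn ({(1,1,a), (1,6,c), (2,2,a), (2,5,b), (3,3,b), (3,4,c)} :
        Finset (ℕ × ℕ × ℕ)) G := by
  rintro ⟨I₁, I₂, I₃, inj1, inj2, inj3, hmul⟩
  have m1 : ((1,1,a) : ℕ×ℕ×ℕ) ∈ ({(1,1,a), (1,6,c), (2,2,a), (2,5,b), (3,3,b), (3,4,c)} :
      Finset (ℕ × ℕ × ℕ)) := by simp
  have m2 : ((1,6,c) : ℕ×ℕ×ℕ) ∈ ({(1,1,a), (1,6,c), (2,2,a), (2,5,b), (3,3,b), (3,4,c)} :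
      Finset (ℕ × ℕ × ℕ)) := by simp
  have m3 : ((2,2,a) : ℕ×ℕ×ℕ) ∈ ({(1,1,a), (1,6,c), (2,2,a), (2,5,b), (3,3,b), (3,4,c)} :
      Finset (ℕ × ℕ × ℕ)) := by simp
  have m4 : ((2,5,b) : ℕ×ℕ×ℕ) ∈ ({(1,1,a), (1,6,c), (2,2,a), (2,5,b), (3,3,b), (3,4,c)} :
      Finset (ℕ × ℕ × ℕ)) := by simp
  have m5 : ((3,3,b) : ℕ×ℕ×ℕ) ∈ ({(1,1,a), (1,6,c), (2,2,a), (2,5,b), (3,3,b), (3,4,c)} :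
      Finset (ℕ × ℕ × ℕ)) := by simp
  have m6 : ((3,4,c) : ℕ×ℕ×ℕ) ∈ ({(1,1,a), (1,6,c), (2,2,a), (2,5,b), (3,3,b), (3,4,c)} :
      Finset (ℕ × ℕ × ℕ)) := by simp
  have E1 : I₁ 1 * I₂ 1 = I₃ a := hmul _ m1
  have E2 : I₁ 1 * I₂ 6 = I₃ c := hmul _ m2
  have E3 : I₁ 2 * I₂ 2 = I₃ a := hmul _ m3
  have E4 : I₁ 2 * I₂ 5 = I₃ b := hmul _ m4
  have E5 : I₁ 3 * I₂ 3 = I₃ b := hmul _ m5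
  have E6 : I₁ 3 * I₂ 4 = I₃ c := hmul _ m6
  -- memberships in rows/cols/syms
  have hr1 : (1:ℕ) ∈ rowsOf _ := ⟨_, m1, rfl⟩
  have hr2 : (2:ℕ) ∈ rowsOf _ := ⟨_, m3, rfl⟩
  have hr3 : (3:ℕ) ∈ rowsOf _ := ⟨_, m5, rfl⟩
  have hc1 : (1:ℕ) ∈ colsOf _ := ⟨_, m1, rfl⟩
  have hc2 : (2:ℕ) ∈ colsOf _ := ⟨_, m3, rfl⟩
  have hc3 : (3:ℕ) ∈ colsOf _ := ⟨_, m5, rfl⟩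
  have hc4 : (4:ℕ) ∈ colsOf _ := ⟨_, m6, rfl⟩
  have hc5 : (5:ℕ) ∈ colsOf _ := ⟨_, m4, rfl⟩
  have hc6 : (6:ℕ) ∈ colsOf _ := ⟨_, m2, rfl⟩
  have hsa : a ∈ symsOf _ := ⟨_, m1, rfl⟩
  have hsb : b ∈ symsOf _ := ⟨_, m4, rfl⟩
  have hsc : c ∈ symsOf _ := ⟨_, m2, rfl⟩
  -- distinctness
  have hx12 : I₁ 1 ≠ I₁ 2 := fun h => by simpa using inj1 hr1 hr2 h
  have hx13 : I₁ 1 ≠ I₁ 3 := fun h => by simpa using inj1 hr1 hr3 h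
  have hx23 : I₁ 2 ≠ I₁ 3 := fun h => by simpa using inj1 hr2 hr3 h
  have hsAB : I₃ a ≠ I₃ b := fun h => hab (inj3 hsa hsb h)
  have hsAC : I₃ a ≠ I₃ c := fun h => hac (inj3 hsa hsc h)
  have hsBC : I₃ b ≠ I₃ c := fun h => hbc (inj3 hsb hsc h)
  have hy15 : I₂ 1 ≠ I₂ 5 := fun h => by simpa using inj2 hc1 hc5 h
  have hy13 : I₂ 1 ≠ I₂ 3 := fun h => by simpa using inj2 hc1 hc3 h
  have hy16 : I₂ 1 ≠ I₂ 6 := fun h => by simpa using inj2 hc1 hc6 h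
  have hy14 : I₂ 1 ≠ I₂ 4 := fun h => by simpa using inj2 hc1 hc4 h
  have hy25 : I₂ 2 ≠ I₂ 5 := fun h => by simpa using inj2 hc2 hc5 h
  have hy23 : I₂ 2 ≠ I₂ 3 := fun h => by simpa using inj2 hc2 hc3 h
  have hy26 : I₂ 2 ≠ I₂ 6 := fun h => by simpa using inj2 hc2 hc6 h
  have hy24 : I₂ 2 ≠ I₂ 4 := fun h => by simpa using inj2 hc2 hc4 h
  have hy53 : I₂ 5 ≠ I₂ 3 := fun h => by simpa using inj2 hc5 hc3 h
  have hy56 : I₂ 5 ≠ I₂ 6 := fun h => by simpa using inj2 hc5 hc6 h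
  have hy54 : I₂ 5 ≠ I₂ 4 := fun h => by simpa using inj2 hc5 hc4 h
  have hy36 : I₂ 3 ≠ I₂ 6 := fun h => by simpa using inj2 hc3 hc6 h
  have hy34 : I₂ 3 ≠ I₂ 4 := fun h => by simpa using inj2 hc3 hc4 h
  have hy64 : I₂ 6 ≠ I₂ 4 := fun h => by simpa using inj2 hc6 hc4 h
  -- column values
  have hv1 : I₂ 1 = (I₁ 1)⁻¹ * I₃ a := by rw [← E1, inv_mul_cancel_left]
  have hv2 : I₂ 2 = (I₁ 2)⁻¹ * I₃ a := by rw [← E3, inv_mul_cancel_left]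
  have hv3 : I₂ 3 = (I₁ 3)⁻¹ * I₃ b := by rw [← E5, inv_mul_cancel_left]
  have hv4 : I₂ 4 = (I₁ 3)⁻¹ * I₃ c := by rw [← E6, inv_mul_cancel_left]
  have hv5 : I₂ 5 = (I₁ 2)⁻¹ * I₃ b := by rw [← E4, inv_mul_cancel_left]
  have hv6 : I₂ 6 = (I₁ 1)⁻¹ * I₃ c := by rw [← E2, inv_mul_cancel_left]
  -- normalized forms
  have hn1 : I₁ 1 * I₂ 1 * (I₃ a)⁻¹ = 1 := by rw [E1]; group
  have hn2 : I₁ 1 * I₂ 2 * (I₃ a)⁻¹ = I₁ 1 * (I₁ 2)⁻¹ := by rw [hv2]; group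
  have hn5 : I₁ 1 * I₂ 5 * (I₃ a)⁻¹ = I₁ 1 * (I₁ 2)⁻¹ * (I₃ b * (I₃ a)⁻¹) := by
    rw [hv5]; group
  have hn3 : I₁ 1 * I₂ 3 * (I₃ a)⁻¹ = I₁ 1 * (I₁ 3)⁻¹ * (I₃ b * (I₃ a)⁻¹) := by
    rw [hv3]; group
  have hn6 : I₁ 1 * I₂ 6 * (I₃ a)⁻¹ = I₃ c * (I₃ a)⁻¹ := by rw [hv6]; group
  have hn4 : I₁ 1 * I₂ 4 * (I₃ a)⁻¹ = I₁ 1 * (I₁ 3)⁻¹ * (I₃ c * (I₃ a)⁻¹) := by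
    rw [hv4]; group
  have nne : ∀ i j : ℕ, I₂ i ≠ I₂ j →
      I₁ 1 * I₂ i * (I₃ a)⁻¹ ≠ I₁ 1 * I₂ j * (I₃ a)⁻¹ :=
    fun i j hij h => hij (mul_left_cancel (mul_right_cancel h))
  exact key hG (I₁ 1 * (I₁ 2)⁻¹) (I₁ 1 * (I₁ 3)⁻¹) (I₃ b * (I₃ a)⁻¹) (I₃ c * (I₃ a)⁻¹)
    (fun h => hx12 (mul_inv_eq_one.mp h))
    (fun h => hx13 (mul_inv_eq_one.mp h))
    (fun h => hx23 (inv_injective (mul_left_cancel h)))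
    (fun h => hsAB (mul_inv_eq_one.mp h).symm)
    (fun h => hsAC (mul_inv_eq_one.mp h).symm)
    (fun h => hsBC (mul_right_cancel h))
    (by rw [← hn1, ← hn5]; exact nne 1 5 hy15)
    (by rw [← hn1, ← hn3]; exact nne 1 3 hy13)
    (by rw [← hn1, ← hn6]; exact nne 1 6 hy16)
    (by rw [← hn1, ← hn4]; exact nne 1 4 hy14)
    (by rw [← hn5, ← hn2]; exact nne 2 5 hy25)
    (by rw [← hn2, ← hn3]; exact nne 2 3 hy23)
    (by rw [← hn2, ← hn6]; exact nne 2 6 hy26)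
    (by rw [← hn2, ← hn4]; exact nne 2 4 hy24)
    (by rw [← hn5, ← hn3]; exact nne 5 3 hy53)
    (by rw [← hn5, ← hn6]; exact nne 5 6 hy56)
    (by rw [← hn5, ← hn4]; exact nne 5 4 hy54)
    (by rw [← hn3, ← hn6]; exact nne 3 6 hy36)
    (by rw [← hn3, ← hn4]; exact nne 3 4 hy34)
    (by rw [← hn4, ← hn6]; exact nne 6 4 hy64)
end

section
/- Let a, b, c, d be four distinct symbols and let P be the PLS of size 6 with triples (1,1,a), (1,2,b), (2,1,c), (2,3,b), (3,2,c), (3,3,d). Then P does not embed into any abelian group. -/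
/-- The PLS \eqref{e:nonab} does not embed in any abelian group. -/
theorem nonab_not_in_abelian (a b c d : ℕ)
    (hab : a ≠ b) (hac : a ≠ c) (had : a ≠ d) (hbc : b ≠ c) (hbd : b ≠ d)
    (hcd : c ≠ d) (G : Type*) [CommGroup G] :
    ¬ EmbedsIn ({(1,1,a), (1,2,b), (2,1,c), (2,3,b), (3,2,c), (3,3,d)} :
        Finset (ℕ × ℕ × ℕ)) G := by
  rintro ⟨I1, I2, I3, -, -, h3, h⟩
  have e1 := h (1,1,a) (by simp)
  have e2 := h (1,2,b) (by simp)
  have e3 := h (2,1,c) (by simp)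
  have e4 := h (2,3,b) (by simp)
  have e5 := h (3,2,c) (by simp)
  have e6 := h (3,3,d) (by simp)
  simp only at e1 e2 e3 e4 e5 e6
  have k1 : I3 b * I3 c = I3 a * (I1 2 * I2 2) := by
    rw [← e2, ← e3, ← e1]
    simp [mul_comm, mul_left_comm, mul_assoc]
  have k2 : I3 b * I3 c = I3 d * (I1 2 * I2 2) := by
    rw [← e4, ← e5, ← e6]
    simp [mul_comm, mul_left_comm, mul_assoc]
  have hval : I3 a = I3 d := mul_right_cancel (k1.symm.trans k2)
  exact had (h3 ⟨(1,1,a), by simp, rfl⟩ ⟨(3,3,d), by simp, rfl⟩ hval)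
end

section
/- Let a, b, c, d be four distinct symbols and let P be the PLS of size 6 with triples (1,1,a), (1,2,b), (2,1,c), (2,3,b), (3,2,c), (3,3,d). Then for every integer k ≥ 3, P embeds into the dihedral group D_{2k} of order 2k. -/
lemma zmod_ne_of (k m n : ℕ) (hm : m < k) (hn : n < k) (h : m ≠ n) :
    (m : ZMod k) ≠ (n : ZMod k) := by
  intro he
  rw [ZMod.natCast_eq_natCast_iff] at he
  exact h (he.eq_of_lt_of_lt hm hn)


/-- The PLS \eqref{e:nonab} embeds in every dihedral group of order at least 6. -/
theorem nonab_in_dihedral (a b c d : ℕ)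
    (hab : a ≠ b) (hac : a ≠ c) (had : a ≠ d) (hbc : b ≠ c) (hbd : b ≠ d)
    (hcd : c ≠ d) (k : ℕ) (hk : 3 ≤ k) :
    EmbedsIn ({(1,1,a), (1,2,b), (2,1,c), (2,3,b), (3,2,c), (3,3,d)} :
        Finset (ℕ × ℕ × ℕ)) (DihedralGroup k) := by
  have h01 : ((0 : ℕ) : ZMod k) ≠ ((1 : ℕ) : ZMod k) := zmod_ne_of k 0 1 (by omega) (by omega) (by omega)
  have h02 : ((0 : ℕ) : ZMod k) ≠ ((2 : ℕ) : ZMod k) := zmod_ne_of k 0 2 (by omega) (by omega) (by omega)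
  have h12 : ((1 : ℕ) : ZMod k) ≠ ((2 : ℕ) : ZMod k) := zmod_ne_of k 1 2 (by omega) (by omega) (by omega)
  simp only [Nat.cast_zero, Nat.cast_one, Nat.cast_ofNat] at h01 h02 h12
  refine ⟨(fun n => if n = 1 then .r 0 else if n = 2 then .sr 0 else .sr 1),
    (fun n => if n = 1 then .r 2 else if n = 2 then .r 1 else .sr 1),
    (fun n => if n = a then .r 2 else if n = b then .r 1 else if n = c then .sr 2 else .r 0),
    ?_, ?_, ?_, ?_⟩
  · intro x hx y hy hxy
    simp only [rowsOf, Finset.mem_insert, Finset.mem_singleton, Set.mem_setOf_eq] at hx hy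
    obtain ⟨t, ht, rfl⟩ := hx
    obtain ⟨u, hu, rfl⟩ := hy
    rcases ht with rfl|rfl|rfl|rfl|rfl|rfl <;> rcases hu with rfl|rfl|rfl|rfl|rfl|rfl <;>
      simp_all [-DihedralGroup.r_zero]
  · intro x hx y hy hxy
    simp only [colsOf, Finset.mem_insert, Finset.mem_singleton, Set.mem_setOf_eq] at hx hy
    obtain ⟨t, ht, rfl⟩ := hx
    obtain ⟨u, hu, rfl⟩ := hy
    rcases ht with rfl|rfl|rfl|rfl|rfl|rfl <;> rcases hu with rfl|rfl|rfl|rfl|rfl|rfl <;>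
      simp_all
  · intro x hx y hy hxy
    simp only [symsOf, Finset.mem_insert, Finset.mem_singleton, Set.mem_setOf_eq] at hx hy
    obtain ⟨t, ht, rfl⟩ := hx
    obtain ⟨u, hu, rfl⟩ := hy
    rcases ht with rfl|rfl|rfl|rfl|rfl|rfl <;> rcases hu with rfl|rfl|rfl|rfl|rfl|rfl <;>
      simp_all [-DihedralGroup.r_zero, hab, hac, had, hbc, hbd, hcd, hab.symm, hac.symm, had.symm, hbc.symm,
        hbd.symm, hcd.symm, h01, h02, h12, h01.symm, h02.symm, h12.symm]
  · intro t ht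
    fin_cases ht <;>
      simp_all [DihedralGroup.r_mul_r, DihedralGroup.sr_mul_r, DihedralGroup.r_mul_sr,
        DihedralGroup.sr_mul_sr, hab, hac, had, hbc, hbd, hcd, hab.symm, hac.symm, had.symm,
        hbc.symm, hbd.symm, hcd.symm, one_add_one_eq_two,
        h01, h02, h12, h01.symm, h02.symm, h12.symm]
end

section
/- Let a, b be two distinct symbols and let P be the PLS of size 4 with triples (1,1,a), (1,2,b), (2,2,a), (2,3,b). If a group G contains an element of order greater than 2 (i.e. an element g with g² ≠ ε, where ε is the identity), then P embeds in G. In particular, P embeds in every group that is not an elementary abelian 2-group. -/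
/-- The PLS \eqref{e:noninterc} embeds in any group having an element of order
greater than 2, i.e. any group that is not an elementary abelian 2-group. -/
theorem noninterc_embeds (a b : ℕ) (hab : a ≠ b)
    (G : Type*) [Group G] (hG : ∃ g : G, g ^ 2 ≠ 1) :
    EmbedsIn ({(1,1,a), (1,2,b), (2,2,a), (2,3,b)} : Finset (ℕ × ℕ × ℕ)) G := by
  obtain ⟨g, hg⟩ := hG
  have hg1 : g ≠ 1 := by rintro rfl; simp at hg
  have hgg : g * g ≠ 1 := by rwa [← sq]
  have hinv : g⁻¹ ≠ 1 := by simpa using hg1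
  have hinv2 : g⁻¹ * g⁻¹ ≠ 1 := fun h => hgg (by
    have := congrArg (fun x => g * x * g) h
    simpa [mul_assoc] using this.symm)
  refine ⟨fun n => if n = 1 then 1 else g,
          fun n => if n = 1 then 1 else if n = 2 then g⁻¹ else g⁻¹ * g⁻¹,
          fun n => if n = a then 1 else g⁻¹, ?_, ?_, ?_, ?_⟩
  · intro x hx y hy h
    simp only [rowsOf, Set.mem_setOf_eq] at hx hy
    obtain ⟨t, ht, rfl⟩ := hx
    obtain ⟨u, hu, rfl⟩ := hy
    fin_cases ht <;> fin_cases hu <;> simp_all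
  · intro x hx y hy h
    simp only [colsOf, Set.mem_setOf_eq] at hx hy
    obtain ⟨t, ht, rfl⟩ := hx
    obtain ⟨u, hu, rfl⟩ := hy
    fin_cases ht <;> fin_cases hu <;> simp_all
  · intro x hx y hy h
    simp only [symsOf, Set.mem_setOf_eq] at hx hy
    obtain ⟨t, ht, rfl⟩ := hx
    obtain ⟨u, hu, rfl⟩ := hy
    fin_cases ht <;> fin_cases hu <;> simp_all [hab.symm]
  · intro t ht
    fin_cases ht <;> simp [hab.symm]
end

section
/- Let a, b, c be three distinct symbols and let P be the PLS of size 7 with triples (1,1,a), (1,2,b), (1,3,c), (2,1,b), (2,2,a), (3,1,c), (3,3,a). If a group G contains two distinct elements of order 2, then P embeds in G. In particular, P embeds in the dihedral group D_{2k} for every k ≥ 2. -/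
set_option maxRecDepth 4000 in
lemma main_embed (a b c : ℕ) (hab : a ≠ b) (hac : a ≠ c) (hbc : b ≠ c)
    (G : Type*) [Group G] (hG : ∃ g h : G, g ≠ h ∧ orderOf g = 2 ∧ orderOf h = 2) :
    EmbedsIn ({(1,1,a), (1,2,b), (1,3,c), (2,1,b), (2,2,a), (3,1,c), (3,3,a)} :
      Finset (ℕ × ℕ × ℕ)) G := by
  obtain ⟨g, h, hgh, hg, hh⟩ := hG
  have hba : b ≠ a := hab.symm
  have hca : c ≠ a := hac.symm
  have hcb : c ≠ b := hbc.symm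
  have hg1 : g ≠ 1 := by
    intro e; rw [e, orderOf_one] at hg; exact absurd hg (by norm_num)
  have hh1 : h ≠ 1 := by
    intro e; rw [e, orderOf_one] at hh; exact absurd hh (by norm_num)
  have hg2 : g * g = 1 := by
    have := pow_orderOf_eq_one g; rw [hg] at this; simpa [pow_two] using this
  have hh2 : h * h = 1 := by
    have := pow_orderOf_eq_one h; rw [hh] at this; simpa [pow_two] using this
  refine ⟨(fun n => if n = 1 then 1 else if n = 2 then g else h),
          (fun n => if n = 1 then 1 else if n = 2 then g else h),
          (fun s => if s = a then 1 else if s = b then g else h), ?_, ?_, ?_, ?_⟩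
  · intro x hx y hy hxy
    simp only [rowsOf, Set.mem_setOf_eq, Finset.mem_insert, Finset.mem_singleton] at hx hy
    obtain ⟨t, ht, rfl⟩ := hx
    obtain ⟨u, hu, rfl⟩ := hy
    rcases ht with rfl|rfl|rfl|rfl|rfl|rfl|rfl <;>
      rcases hu with rfl|rfl|rfl|rfl|rfl|rfl|rfl <;>
      simp_all
  · intro x hx y hy hxy
    simp only [colsOf, Set.mem_setOf_eq, Finset.mem_insert, Finset.mem_singleton] at hx hy
    obtain ⟨t, ht, rfl⟩ := hx
    obtain ⟨u, hu, rfl⟩ := hy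
    rcases ht with rfl|rfl|rfl|rfl|rfl|rfl|rfl <;>
      rcases hu with rfl|rfl|rfl|rfl|rfl|rfl|rfl <;>
      simp_all
  · intro x hx y hy hxy
    simp only [symsOf, Set.mem_setOf_eq, Finset.mem_insert, Finset.mem_singleton] at hx hy
    obtain ⟨t, ht, rfl⟩ := hx
    obtain ⟨u, hu, rfl⟩ := hy
    rcases ht with rfl|rfl|rfl|rfl|rfl|rfl|rfl <;>
      rcases hu with rfl|rfl|rfl|rfl|rfl|rfl|rfl <;>
      simp_all
  · intro t ht
    fin_cases ht <;> simp_all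

/-- The PLS \eqref{e:overlapinterc} embeds in any group with more than one element
of order 2; in particular it embeds in every dihedral group D_{2k} with k ≥ 2. -/
theorem overlapinterc_embeds (a b c : ℕ)
    (hab : a ≠ b) (hac : a ≠ c) (hbc : b ≠ c) :
    (∀ (G : Type*) [Group G], (∃ g h : G, g ≠ h ∧ orderOf g = 2 ∧ orderOf h = 2) →
      EmbedsIn ({(1,1,a), (1,2,b), (1,3,c), (2,1,b), (2,2,a), (3,1,c), (3,3,a)} :
        Finset (ℕ × ℕ × ℕ)) G) ∧
    (∀ k : ℕ, 2 ≤ k →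
      EmbedsIn ({(1,1,a), (1,2,b), (1,3,c), (2,1,b), (2,2,a), (3,1,c), (3,3,a)} :
        Finset (ℕ × ℕ × ℕ)) (DihedralGroup k))  := by
  constructor
  · exact fun G _ hG => main_embed a b c hab hac hbc G hG
  · intro k hk
    refine main_embed a b c hab hac hbc _
      ⟨DihedralGroup.sr 0, DihedralGroup.sr 1, ?_, DihedralGroup.orderOf_sr 0,
        DihedralGroup.orderOf_sr 1⟩
    simp only [ne_eq, DihedralGroup.sr.injEq]
    haveI : Fact (1 < k) := ⟨hk⟩
    exact fun e => one_ne_zero e.symm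
end

section
/- Let a, b, c be three distinct symbols and let P be the PLS of size 7 with triples (1,1,a), (1,2,b), (1,3,c), (2,1,b), (2,2,c), (3,1,c), (3,3,a). If P embeds in a group G, then G contains an element of order 4; in particular P does not embed in any finite group whose order is congruent to 2 modulo 4. Conversely, P embeds into the cyclic group ℤ_n for every positive integer n divisible by 4. -/
lemma order4_aux (a b c : ℕ) (G : Type*) [Group G]
    (h : EmbedsIn ({(1,1,a), (1,2,b), (1,3,c), (2,1,b), (2,2,c), (3,1,c), (3,3,a)} :
        Finset (ℕ × ℕ × ℕ)) G) : ∃ g : G, orderOf g = 4 := by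
  set P : Finset (ℕ × ℕ × ℕ) :=
    {(1,1,a), (1,2,b), (1,3,c), (2,1,b), (2,2,c), (3,1,c), (3,3,a)} with hP
  obtain ⟨I₁, I₂, I₃, h1, h2, h3, hm⟩ := h
  have m1 : ((1,1,a) : ℕ×ℕ×ℕ) ∈ P := by simp [hP]
  have m2 : ((1,2,b) : ℕ×ℕ×ℕ) ∈ P := by simp [hP]
  have m3 : ((1,3,c) : ℕ×ℕ×ℕ) ∈ P := by simp [hP]
  have m4 : ((2,1,b) : ℕ×ℕ×ℕ) ∈ P := by simp [hP]
  have m5 : ((2,2,c) : ℕ×ℕ×ℕ) ∈ P := by simp [hP]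
  have m6 : ((3,1,c) : ℕ×ℕ×ℕ) ∈ P := by simp [hP]
  have m7 : ((3,3,a) : ℕ×ℕ×ℕ) ∈ P := by simp [hP]
  have e1 := hm _ m1
  have e2 := hm _ m2
  have e3 := hm _ m3
  have e4 := hm _ m4
  have e5 := hm _ m5
  have e6 := hm _ m6
  have e7 := hm _ m7
  simp only at e1 e2 e3 e4 e5 e6 e7
  set R1 := I₁ 1; set R2 := I₁ 2; set R3 := I₁ 3
  set C1 := I₂ 1; set C2 := I₂ 2; set C3 := I₂ 3
  have h24 : R1 * C2 = R2 * C1 := e2.trans e4.symm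
  have h53 : R2 * C2 = R1 * C3 := e5.trans e3.symm
  have h63 : R3 * C1 = R1 * C3 := e6.trans e3.symm
  have h71 : R3 * C3 = R1 * C1 := e7.trans e1.symm
  have key1 : C2 * C1⁻¹ * C2 = C3 := by
    have h : R1 * (C2 * C1⁻¹ * C2) = R1 * C3 := by
      calc R1 * (C2 * C1⁻¹ * C2) = R1 * C2 * C1⁻¹ * C2 := by group
      _ = R2 * C1 * C1⁻¹ * C2 := by rw [h24]
      _ = R2 * C2 := by group
      _ = R1 * C3 := h53
    exact mul_left_cancel h
  have key2 : C3 * C1⁻¹ * C3 = C1 := by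
    have h : R1 * (C3 * C1⁻¹ * C3) = R1 * C1 := by
      calc R1 * (C3 * C1⁻¹ * C3) = R1 * C3 * C1⁻¹ * C3 := by group
      _ = R3 * C1 * C1⁻¹ * C3 := by rw [h63]
      _ = R3 * C3 := by group
      _ = R1 * C1 := h71
    exact mul_left_cancel h
  refine ⟨C1⁻¹ * C2, ?_⟩
  have hg2 : (C1⁻¹ * C2) ^ 2 = C1⁻¹ * C3 := by
    calc (C1⁻¹ * C2) ^ 2 = C1⁻¹ * (C2 * C1⁻¹ * C2) := by rw [pow_two]; group
    _ = C1⁻¹ * C3 := by rw [key1]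
  have hg4 : (C1⁻¹ * C2) ^ (2 ^ 2) = 1 := by
    have : (C1⁻¹ * C2) ^ (2^2) = ((C1⁻¹ * C2) ^ 2) ^ 2 := by
      rw [show (2:ℕ)^2 = 2*2 from rfl, pow_mul]
    rw [this, hg2]
    calc (C1⁻¹ * C3) ^ 2 = C1⁻¹ * (C3 * C1⁻¹ * C3) := by rw [pow_two]; group
    _ = C1⁻¹ * C1 := by rw [key2]
    _ = 1 := by group
  have c1mem : (1 : ℕ) ∈ colsOf P := ⟨(1,1,a), m1, rfl⟩
  have c3mem : (3 : ℕ) ∈ colsOf P := ⟨(1,3,c), m3, rfl⟩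
  have hg2ne : (C1⁻¹ * C2) ^ (2 ^ 1) ≠ 1 := by
    rw [pow_one, hg2]
    intro h
    have : C1 = C3 := inv_mul_eq_one.mp h
    exact (by norm_num : (1:ℕ) ≠ 3) (h2 c1mem c3mem this)
  haveI : Fact (Nat.Prime 2) := ⟨Nat.prime_two⟩
  have := orderOf_eq_prime_pow hg2ne hg4
  rw [this]; norm_num
/-- The PLS \eqref{e:order4}: any group containing it has an element of order 4,
so it avoids groups of order ≡ 2 (mod 4); conversely it embeds in ℤ_n whenever
4 divides n. -/
theorem order4_criterion (a b c : ℕ)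
    (hab : a ≠ b) (hac : a ≠ c) (hbc : b ≠ c) :
    (∀ (G : Type*) [Group G],
      EmbedsIn ({(1,1,a), (1,2,b), (1,3,c), (2,1,b), (2,2,c), (3,1,c), (3,3,a)} :
        Finset (ℕ × ℕ × ℕ)) G → ∃ g : G, orderOf g = 4) ∧
    (∀ (G : Type*) [Group G] [Fintype G], Fintype.card G % 4 = 2 →
      ¬ EmbedsIn ({(1,1,a), (1,2,b), (1,3,c), (2,1,b), (2,2,c), (3,1,c), (3,3,a)} :
        Finset (ℕ × ℕ × ℕ)) G) ∧
    (∀ n : ℕ, 0 < n → 4 ∣ n →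
      EmbedsIn ({(1,1,a), (1,2,b), (1,3,c), (2,1,b), (2,2,c), (3,1,c), (3,3,a)} :
        Finset (ℕ × ℕ × ℕ)) (Multiplicative (ZMod n))) := by
  set P : Finset (ℕ × ℕ × ℕ) :=
    {(1,1,a), (1,2,b), (1,3,c), (2,1,b), (2,2,c), (3,1,c), (3,3,a)} with hP
  refine ⟨fun G _ h => order4_aux a b c G h, ?_, ?_⟩
  · intro G _ _ hcard hemb
    obtain ⟨g, hg⟩ := order4_aux a b c G hemb
    have hdvd : orderOf g ∣ Fintype.card G := orderOf_dvd_card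
    rw [hg] at hdvd
    omega
    -- need: 4 ∣ card ∧ card % 4 = 2 → False
  · intro n hn hdvd
    obtain ⟨q, hq⟩ := hdvd
    have hq0 : 0 < q := by omega
    haveI : NeZero n := ⟨hn.ne'⟩
    have hqne : (q : ZMod n) ≠ 0 := by
      intro h
      rw [ZMod.natCast_eq_zero_iff] at h
      exact absurd (Nat.le_of_dvd hq0 h) (by omega)
    have h2qne : (q : ZMod n) + q ≠ 0 := by
      intro h
      have h' : ((2 * q : ℕ) : ZMod n) = 0 := by push_cast; linear_combination h
      rw [ZMod.natCast_eq_zero_iff] at h'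
      exact absurd (Nat.le_of_dvd (by omega) h') (by omega)
    have hne12 : (q : ZMod n) ≠ (q : ZMod n) + q := by
      intro h; exact hqne (by linear_combination -h)
    have h4q : ((q : ZMod n)) + q + ((q : ZMod n) + q) = 0 := by
      have : ((4 * q : ℕ) : ZMod n) = 0 := by
        rw [ZMod.natCast_eq_zero_iff]; exact ⟨1, by omega⟩
      push_cast at this; linear_combination this
    have memP : ∀ t ∈ P, t = (1,1,a) ∨ t = (1,2,b) ∨ t = (1,3,c) ∨ t = (2,1,b) ∨
        t = (2,2,c) ∨ t = (3,1,c) ∨ t = (3,3,a) := by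
      intro t ht; simpa [hP] using ht
    have rowmem : ∀ x ∈ rowsOf P, x = 1 ∨ x = 2 ∨ x = 3 := by
      rintro x ⟨t, ht, rfl⟩
      rcases memP t ht with rfl|rfl|rfl|rfl|rfl|rfl|rfl <;> simp
    have colmem : ∀ x ∈ colsOf P, x = 1 ∨ x = 2 ∨ x = 3 := by
      rintro x ⟨t, ht, rfl⟩
      rcases memP t ht with rfl|rfl|rfl|rfl|rfl|rfl|rfl <;> simp
    have symmem : ∀ x ∈ symsOf P, x = a ∨ x = b ∨ x = c := by
      rintro x ⟨t, ht, rfl⟩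
      rcases memP t ht with rfl|rfl|rfl|rfl|rfl|rfl|rfl <;> simp
    set F : ℕ → ZMod n := fun r => if r = 1 then 0 else if r = 2 then (q : ZMod n)
      else (q : ZMod n) + q with hF
    set S : ℕ → ZMod n := fun s => if s = a then 0 else if s = b then (q : ZMod n)
      else (q : ZMod n) + q with hS
    have F1 : F 1 = 0 := by simp [hF]
    have F2 : F 2 = (q : ZMod n) := by norm_num [hF]
    have F3 : F 3 = (q : ZMod n) + q := by norm_num [hF]
    have Sa : S a = 0 := by simp [hS]
    have Sb : S b = (q : ZMod n) := by simp [hS, if_neg (Ne.symm hab)]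
    have Sc : S c = (q : ZMod n) + q := by
      simp [hS, if_neg (Ne.symm hac), if_neg (Ne.symm hbc)]
    refine ⟨fun r => Multiplicative.ofAdd (F r), fun r => Multiplicative.ofAdd (F r),
           fun s => Multiplicative.ofAdd (S s), ?_, ?_, ?_, ?_⟩
    · intro x hx y hy hxy
      have h : F x = F y := Multiplicative.ofAdd.injective hxy
      rcases rowmem x hx with h1|h1|h1 <;> rcases rowmem y hy with h2|h2|h2 <;>
        rw [h1, h2] at h ⊢ <;> simp only [F1, F2, F3] at h <;>
        first
          | rfl | exact absurd h.symm hqne | exact absurd h hqne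
          | exact absurd h.symm h2qne | exact absurd h h2qne
          | exact absurd h hne12 | exact absurd h.symm hne12
    · intro x hx y hy hxy
      have h : F x = F y := Multiplicative.ofAdd.injective hxy
      rcases colmem x hx with h1|h1|h1 <;> rcases colmem y hy with h2|h2|h2 <;>
        rw [h1, h2] at h ⊢ <;> simp only [F1, F2, F3] at h <;>
        first
          | rfl | exact absurd h.symm hqne | exact absurd h hqne
          | exact absurd h.symm h2qne | exact absurd h h2qne
          | exact absurd h hne12 | exact absurd h.symm hne12
    · intro x hx y hy hxy
      have h : S x = S y := Multiplicative.ofAdd.injective hxy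
      rcases symmem x hx with h1|h1|h1 <;> rcases symmem y hy with h2|h2|h2 <;>
        rw [h1, h2] at h ⊢ <;> simp only [Sa, Sb, Sc] at h <;>
        first
          | rfl | exact absurd h.symm hqne | exact absurd h hqne
          | exact absurd h.symm h2qne | exact absurd h h2qne
          | exact absurd h hne12 | exact absurd h.symm hne12
    · intro t ht
      rcases memP t ht with rfl|rfl|rfl|rfl|rfl|rfl|rfl <;>
        simp only [F1, F2, F3, Sa, Sb, Sc, ← ofAdd_add] <;> congr 1 <;>
        first | ring | linear_combination h4q
end

section
/- Let n ≥ 4 be an integer, let a and b be two distinct symbols, and let Δ be the diagonal PLS of size n with triples (i, i, a) for 1 ≤ i ≤ 3 and (i, i, b) for 4 ≤ i ≤ n. Then for any group G of order n, Δ embeds into G if and only if n is divisible by 3. -/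
/-- If a 3-element set `{u₁,u₂,u₃}` is invariant under right multiplication by `e ≠ 1`,
then `e ^ 3 = 1`. -/
lemma key_three {G : Type*} [Group G] {u₁ u₂ u₃ e : G}
    (h12 : u₁ ≠ u₂) (h13 : u₁ ≠ u₃) (h23 : u₂ ≠ u₃) (he : e ≠ 1)
    (m1 : u₁ * e = u₁ ∨ u₁ * e = u₂ ∨ u₁ * e = u₃)
    (m2 : u₂ * e = u₁ ∨ u₂ * e = u₂ ∨ u₂ * e = u₃)
    (m3 : u₃ * e = u₁ ∨ u₃ * e = u₂ ∨ u₃ * e = u₃) :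
    e ^ 3 = 1 := by
  have fix : ∀ u : G, u * e = u → False := fun u h => he (by
    have h' : u * e = u * 1 := by rw [mul_one]; exact h
    exact mul_left_cancel h')
  have cyc : ∀ p q r : G, p * e = q → q * e = r → r * e = p → e ^ 3 = 1 := by
    intro p q r hpq hqr hrp
    have h' : p * e ^ 3 = p := by
      have : p * e ^ 3 = p * e * e * e := by
        rw [pow_succ, pow_succ, pow_one, ← mul_assoc, ← mul_assoc]
      rw [this, hpq, hqr, hrp]
    have h'' : p * e ^ 3 = p * 1 := by rw [mul_one]; exact h'
    exact mul_left_cancel h''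
  rcases m1 with h1 | h1 | h1
  · exact absurd h1 (fun h => fix _ h)
  · -- u₁ e = u₂
    rcases m2 with h2 | h2 | h2
    · rcases m3 with h3 | h3 | h3
      · exact absurd (mul_right_cancel (h3.trans h2.symm)) h23.symm
      · exact absurd (mul_right_cancel (h3.trans h1.symm)) h13.symm
      · exact absurd h3 (fun h => fix _ h)
    · exact absurd h2 (fun h => fix _ h)
    · rcases m3 with h3 | h3 | h3
      · exact cyc u₁ u₂ u₃ h1 h2 h3
      · exact absurd (mul_right_cancel (h3.trans h1.symm)) h13.symm
      · exact absurd h3 (fun h => fix _ h)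
  · -- u₁ e = u₃
    rcases m3 with h3 | h3 | h3
    · rcases m2 with h2 | h2 | h2
      · exact absurd (mul_right_cancel (h2.trans h3.symm)) h23
      · exact absurd h2 (fun h => fix _ h)
      · exact absurd (mul_right_cancel (h2.trans h1.symm)) h12.symm
    · rcases m2 with h2 | h2 | h2
      · exact cyc u₁ u₃ u₂ h1 h3 h2
      · exact absurd h2 (fun h => fix _ h)
      · exact absurd (mul_right_cancel (h2.trans h1.symm)) h12.symm
    · exact absurd h3 (fun h => fix _ h)

/-- The diagonal PLS Δ with symbol `a` on the first three diagonal cells and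
symbol `b` on diagonal cells 4,…,n embeds in a group of order n iff 3 ∣ n. -/
theorem diagonal_three_embeds_iff (n : ℕ) (hn : 4 ≤ n) (a b : ℕ) (hab : a ≠ b)
    (G : Type*) [Group G] [Fintype G] (hG : Fintype.card G = n) :
    EmbedsIn (((Finset.Icc 1 3).image fun i => (i, i, a)) ∪
      ((Finset.Icc 4 n).image fun i => (i, i, b))) G ↔ 3 ∣ n := by
  classical
  set P : Finset (ℕ × ℕ × ℕ) := (((Finset.Icc 1 3).image fun i => (i, i, a)) ∪
      ((Finset.Icc 4 n).image fun i => (i, i, b))) with hP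
  have hmemA : ∀ i, 1 ≤ i → i ≤ 3 → ((i, i, a) : ℕ × ℕ × ℕ) ∈ P := by
    intro i h1 h2
    apply Finset.mem_union_left
    exact Finset.mem_image.mpr ⟨i, Finset.mem_Icc.mpr ⟨h1, h2⟩, rfl⟩
  have hmemB : ∀ i, 4 ≤ i → i ≤ n → ((i, i, b) : ℕ × ℕ × ℕ) ∈ P := by
    intro i h1 h2
    apply Finset.mem_union_right
    exact Finset.mem_image.mpr ⟨i, Finset.mem_Icc.mpr ⟨h1, h2⟩, rfl⟩
  have hmem : ∀ t : ℕ × ℕ × ℕ, t ∈ P →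
      (∃ i, 1 ≤ i ∧ i ≤ 3 ∧ t = (i, i, a)) ∨ (∃ i, 4 ≤ i ∧ i ≤ n ∧ t = (i, i, b)) := by
    intro t ht
    rcases Finset.mem_union.mp ht with h | h
    · obtain ⟨i, hi, rfl⟩ := Finset.mem_image.mp h
      exact Or.inl ⟨i, (Finset.mem_Icc.mp hi).1, (Finset.mem_Icc.mp hi).2, rfl⟩
    · obtain ⟨i, hi, rfl⟩ := Finset.mem_image.mp h
      exact Or.inr ⟨i, (Finset.mem_Icc.mp hi).1, (Finset.mem_Icc.mp hi).2, rfl⟩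
  have hrows : ∀ i, 1 ≤ i → i ≤ n → i ∈ rowsOf P := by
    intro i h1 h2
    rcases le_or_gt i 3 with h | h
    · exact ⟨(i, i, a), hmemA i h1 h, rfl⟩
    · exact ⟨(i, i, b), hmemB i h h2, rfl⟩
  have hcols : ∀ i, 1 ≤ i → i ≤ n → i ∈ colsOf P := by
    intro i h1 h2
    rcases le_or_gt i 3 with h | h
    · exact ⟨(i, i, a), hmemA i h1 h, rfl⟩
    · exact ⟨(i, i, b), hmemB i h h2, rfl⟩
  have hsymA : a ∈ symsOf P := ⟨(1, 1, a), hmemA 1 le_rfl (by norm_num), rfl⟩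
  have hsymB : b ∈ symsOf P := ⟨(4, 4, b), hmemB 4 le_rfl hn, rfl⟩
  have hrows' : ∀ r ∈ rowsOf P, 1 ≤ r ∧ r ≤ n := by
    rintro r ⟨t, ht, rfl⟩
    rcases hmem t ht with ⟨i, h1, h2, rfl⟩ | ⟨i, h1, h2, rfl⟩
    · exact ⟨h1, le_trans h2 (by omega)⟩
    · exact ⟨le_trans (by norm_num) h1, h2⟩
  have hcols' : ∀ c ∈ colsOf P, 1 ≤ c ∧ c ≤ n := by
    rintro c ⟨t, ht, rfl⟩
    rcases hmem t ht with ⟨i, h1, h2, rfl⟩ | ⟨i, h1, h2, rfl⟩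
    · exact ⟨h1, le_trans h2 (by omega)⟩
    · exact ⟨le_trans (by norm_num) h1, h2⟩
  have hsyms' : ∀ s ∈ symsOf P, s = a ∨ s = b := by
    rintro s ⟨t, ht, rfl⟩
    rcases hmem t ht with ⟨i, h1, h2, rfl⟩ | ⟨i, h1, h2, rfl⟩
    · exact Or.inl rfl
    · exact Or.inr rfl
  constructor
  · rintro ⟨I₁, I₂, I₃, h1, h2, h3, hmul⟩
    set A := I₃ a with hA'
    set B := I₃ b with hB'
    have hA : ∀ i, 1 ≤ i → i ≤ 3 → I₁ i * I₂ i = A := fun i hi hi' => hmul _ (hmemA i hi hi')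
    have hB : ∀ i, 4 ≤ i → i ≤ n → I₁ i * I₂ i = B := fun i hi hi' => hmul _ (hmemB i hi hi')
    have hABne : A ≠ B := fun h => hab (h3 hsymA hsymB h)
    -- I₂ is surjective from [1,n] onto G
    have hsurj : ∀ g : G, ∃ j, 1 ≤ j ∧ j ≤ n ∧ I₂ j = g := by
      intro g
      have hinj : Set.InjOn I₂ (Finset.Icc 1 n : Set ℕ) := by
        intro x hx y hy hxy
        simp only [Finset.coe_Icc, Set.mem_Icc] at hx hy
        exact h2 (hcols x hx.1 hx.2) (hcols y hy.1 hy.2) hxy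
      have hcard : ((Finset.Icc 1 n).image I₂).card = Fintype.card G := by
        rw [Finset.card_image_of_injOn hinj, Nat.card_Icc, hG]
        omega
      have huniv := Finset.eq_univ_of_card _ hcard
      have : g ∈ (Finset.Icc 1 n).image I₂ := huniv ▸ Finset.mem_univ g
      obtain ⟨j, hj, hj2⟩ := Finset.mem_image.mp this
      exact ⟨j, (Finset.mem_Icc.mp hj).1, (Finset.mem_Icc.mp hj).2, hj2⟩
    set e := A⁻¹ * B with he'
    have he : e ≠ 1 := by
      intro h
      apply hABne
      rw [he'] at h
      have : A * (A⁻¹ * B) = A * 1 := by rw [h]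
      rw [← mul_assoc, mul_inv_cancel, one_mul, mul_one] at this
      exact this.symm
    have hkey : ∀ i, 1 ≤ i → i ≤ 3 →
        I₂ i * e = I₂ 1 ∨ I₂ i * e = I₂ 2 ∨ I₂ i * e = I₂ 3 := by
      intro i hi hi'
      have hval : I₂ i * e = (I₁ i)⁻¹ * B := by
        have h := hA i hi hi'
        have hI : I₂ i = (I₁ i)⁻¹ * A := by
          rw [← h, ← mul_assoc, inv_mul_cancel, one_mul]
        rw [hI, he']
        group
      obtain ⟨j, hj1, hjn, hj⟩ := hsurj ((I₁ i)⁻¹ * B)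
      have hj3 : j ≤ 3 := by
        by_contra hcon
        push_neg at hcon
        have hBj := hB j hcon hjn
        have hIj : I₁ j = I₁ i := by
          rw [hj] at hBj
          have : I₁ j * ((I₁ i)⁻¹ * B) * B⁻¹ = B * B⁻¹ := by rw [hBj]
          rw [mul_assoc, mul_assoc, mul_inv_cancel, mul_one] at this
          calc I₁ j = I₁ j * ((I₁ i)⁻¹ * I₁ i) := by rw [inv_mul_cancel, mul_one]
            _ = (I₁ j * (I₁ i)⁻¹) * I₁ i := by rw [mul_assoc]
            _ = I₁ i := by rw [this, one_mul]
        have := h1 (hrows j (by omega) hjn) (hrows i hi (by omega)) hIj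
        omega
      rw [hval, ← hj]
      interval_cases j
      · exact Or.inl rfl
      · exact Or.inr (Or.inl rfl)
      · exact Or.inr (Or.inr rfl)
    have hd : ∀ i j, 1 ≤ i → i ≤ 3 → 1 ≤ j → j ≤ 3 → i ≠ j → I₂ i ≠ I₂ j := by
      intro i j hi hi' hj hj' hij h
      exact hij (h2 (hcols i hi (by omega)) (hcols j hj (by omega)) h)
    have he3 : e ^ 3 = 1 :=
      key_three (hd 1 2 (by norm_num) (by norm_num) (by norm_num) (by norm_num) (by norm_num))
        (hd 1 3 (by norm_num) (by norm_num) (by norm_num) (by norm_num) (by norm_num))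
        (hd 2 3 (by norm_num) (by norm_num) (by norm_num) (by norm_num) (by norm_num))
        he (hkey 1 (by norm_num) (by norm_num)) (hkey 2 (by norm_num) (by norm_num))
        (hkey 3 (by norm_num) (by norm_num))
    have hdvd : orderOf e ∣ 3 := orderOf_dvd_of_pow_eq_one he3
    have ho : orderOf e = 3 := by
      rcases (Nat.prime_three).eq_one_or_self_of_dvd _ hdvd with h | h
      · exact absurd (orderOf_eq_one_iff.mp h) he
      · exact h
    rw [← hG, ← ho]
    exact orderOf_dvd_card
  · intro h3n
    have hfact : Fact (Nat.Prime 3) := ⟨Nat.prime_three⟩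
    obtain ⟨c, hc⟩ := exists_prime_orderOf_dvd_card 3 (hG ▸ h3n)
    have hc1 : c ≠ 1 := by
      intro h; rw [h, orderOf_one] at hc; omega
    have hc3 : c * (c * c) = 1 := by
      have := pow_orderOf_eq_one c
      rw [hc] at this
      rw [← this, pow_succ, pow_succ, pow_one, mul_assoc]
    have hcc1 : c * c ≠ 1 := by
      intro h
      have : orderOf c ∣ 2 := orderOf_dvd_of_pow_eq_one (by rw [pow_two]; exact h)
      rw [hc] at this; omega
    have hccc : c ≠ c * c := by
      intro h
      apply hc1
      have : c * 1 = c * c := by rw [mul_one]; exact h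
      exact (mul_left_cancel this).symm
    have h1cc : (1 : G) ≠ c * c := fun h => hcc1 h.symm
    set U : Finset G := {1, c, c * c} with hU
    have hUmem : ∀ g : G, g ∈ U ↔ g = 1 ∨ g = c ∨ g = c * c := by
      intro g; simp [hU]
    have hUcard : U.card = 3 := by
      rw [hU, Finset.card_insert_of_notMem (by simp [hc1.symm, h1cc]),
        Finset.card_insert_of_notMem (by simp [hccc]), Finset.card_singleton]
    have hcompl : (Finset.Icc 4 n).card = (Uᶜ).card := by
      rw [Finset.card_compl, hUcard, hG, Nat.card_Icc]
      omega
    obtain ⟨f⟩ : Nonempty ((Finset.Icc 4 n : Finset ℕ) ≃ (Uᶜ : Finset G)) :=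
      ⟨Finset.equivOfCardEq hcompl⟩
    obtain ⟨x, hx1, hx2, hx3, hx4⟩ :
        ∃ x : ℕ → G, x 1 = 1 ∧ x 2 = c * c ∧ x 3 = c ∧
          ∀ i (h : i ∈ Finset.Icc 4 n), x i = (f ⟨i, h⟩ : G) := by
      refine ⟨fun i => if i = 1 then 1 else if i = 2 then c * c else if i = 3 then c
        else if h : i ∈ Finset.Icc 4 n then (f ⟨i, h⟩ : G) else 1, by norm_num, by norm_num,
        by norm_num, ?_⟩
      intro i h
      have h4 : 4 ≤ i := (Finset.mem_Icc.mp h).1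
      simp only
      rw [if_neg (by omega), if_neg (by omega), if_neg (by omega), dif_pos h]
    have hxU : ∀ i, 1 ≤ i → i ≤ 3 → x i ∈ U := by
      intro i hi hi'
      interval_cases i
      · rw [hx1, hUmem]; exact Or.inl rfl
      · rw [hx2, hUmem]; exact Or.inr (Or.inr rfl)
      · rw [hx3, hUmem]; exact Or.inr (Or.inl rfl)
    have hxC : ∀ i, 4 ≤ i → i ≤ n → x i ∉ U := by
      intro i hi hi'
      have hm : i ∈ Finset.Icc 4 n := Finset.mem_Icc.mpr ⟨hi, hi'⟩
      rw [hx4 i hm]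
      have := (f ⟨i, hm⟩).2
      exact Finset.mem_compl.mp this
    have hxinj : ∀ i j, 1 ≤ i → i ≤ n → 1 ≤ j → j ≤ n → x i = x j → i = j := by
      intro i j hi hi' hj hj' hxy
      rcases le_or_gt i 3 with h3i | h3i <;> rcases le_or_gt j 3 with h3j | h3j
      · interval_cases i <;> interval_cases j <;> first
          | rfl
          | (rw [hx1, hx2] at hxy; exact absurd hxy h1cc)
          | (rw [hx2, hx1] at hxy; exact absurd hxy.symm h1cc)
          | (rw [hx1, hx3] at hxy; exact absurd hxy.symm hc1)
          | (rw [hx3, hx1] at hxy; exact absurd hxy hc1)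
          | (rw [hx2, hx3] at hxy; exact absurd hxy.symm hccc)
          | (rw [hx3, hx2] at hxy; exact absurd hxy hccc)
      · exact absurd (hxy ▸ hxU i hi h3i) (hxC j h3j hj')
      · exact absurd (hxy.symm ▸ hxU j hj h3j) (hxC i h3i hi')
      · have hmi : i ∈ Finset.Icc 4 n := Finset.mem_Icc.mpr ⟨by omega, hi'⟩
        have hmj : j ∈ Finset.Icc 4 n := Finset.mem_Icc.mpr ⟨by omega, hj'⟩
        rw [hx4 i hmi, hx4 j hmj] at hxy
        have := f.injective (Subtype.ext hxy)
        exact congrArg Subtype.val this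
    -- values of inverses on the first block
    have hinv2 : (c * c)⁻¹ = c := by
      rw [eq_comm, eq_inv_iff_mul_eq_one, ← mul_assoc]
      rw [mul_assoc]; exact hc3
    have hinv3 : c⁻¹ = c * c := by
      rw [eq_comm, eq_comm, inv_eq_iff_mul_eq_one]; exact hc3
    have hyU : ∀ i, 1 ≤ i → i ≤ 3 → (x i)⁻¹ ∈ U := by
      intro i hi hi'
      interval_cases i
      · rw [hx1, inv_one, hUmem]; exact Or.inl rfl
      · rw [hx2, hinv2, hUmem]; exact Or.inr (Or.inl rfl)
      · rw [hx3, hinv3, hUmem]; exact Or.inr (Or.inr rfl)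
    have hyC : ∀ j, 4 ≤ j → j ≤ n → (x j)⁻¹ * c ∉ U := by
      intro j hj hj' hmem'
      apply hxC j hj hj'
      rw [hUmem] at hmem' ⊢
      rcases hmem' with h | h | h
      · -- (x j)⁻¹ * c = 1 → x j = c
        right; left
        have : (x j)⁻¹ = c⁻¹ := by
          rw [eq_inv_iff_mul_eq_one]; exact h
        rw [← inv_inv (x j), this, inv_inv]
      · -- (x j)⁻¹ * c = c → x j = 1
        left
        have : (x j)⁻¹ = 1 := by
          have h2 : (x j)⁻¹ * c = 1 * c := by rw [h, one_mul]
          exact mul_right_cancel h2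
        rw [← inv_inv (x j), this, inv_one]
      · -- (x j)⁻¹ * c = c * c → x j = c⁻¹ = c * c
        right; right
        have h' : (x j)⁻¹ = c := by
          have h2 : (x j)⁻¹ * c = c * c := h
          exact mul_right_cancel h2
        rw [← inv_inv (x j), h', hinv3]
    refine ⟨x, fun i => (x i)⁻¹ * (if 4 ≤ i then c else 1), fun s => if s = a then 1 else c,
      ?_, ?_, ?_, ?_⟩
    · -- InjOn I₁
      intro i hi j hj h
      obtain ⟨hi1, hi2⟩ := hrows' i hi
      obtain ⟨hj1, hj2⟩ := hrows' j hj
      exact hxinj i j hi1 hi2 hj1 hj2 h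
    · -- InjOn I₂
      intro i hi j hj h0
      obtain ⟨hi1, hi2⟩ := hcols' i hi
      obtain ⟨hj1, hj2⟩ := hcols' j hj
      have h : (x i)⁻¹ * (if 4 ≤ i then c else 1) = (x j)⁻¹ * (if 4 ≤ j then c else 1) := h0
      rcases le_or_gt i 3 with h3i | h3i <;> rcases le_or_gt j 3 with h3j | h3j
      · rw [if_neg (by omega), if_neg (by omega), mul_one, mul_one] at h
        exact hxinj i j hi1 hi2 hj1 hj2 (inv_injective h)
      · rw [if_neg (by omega), if_pos (by omega), mul_one] at h
        exact absurd (h ▸ hyU i hi1 h3i) (hyC j (by omega) hj2)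
      · rw [if_pos (by omega), if_neg (by omega), mul_one] at h
        exact absurd (h.symm ▸ hyU j hj1 h3j) (hyC i (by omega) hi2)
      · rw [if_pos (by omega), if_pos (by omega)] at h
        have := mul_right_cancel h
        exact hxinj i j hi1 hi2 hj1 hj2 (inv_injective this)
    · -- InjOn I₃
      intro s hs t ht h0
      have h : (if s = a then 1 else c) = (if t = a then (1 : G) else c) := h0
      rcases hsyms' s hs with rfl | rfl <;> rcases hsyms' t ht with rfl | rfl
      · rfl
      · rw [if_pos rfl, if_neg (Ne.symm hab)] at h
        exact absurd h.symm hc1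
      · rw [if_neg (Ne.symm hab), if_pos rfl] at h
        exact absurd h hc1
      · rfl
    · -- multiplication property
      intro t ht
      rcases hmem t ht with ⟨i, hi1, hi3, rfl⟩ | ⟨i, hi4, hin, rfl⟩
      · show x i * ((x i)⁻¹ * (if 4 ≤ i then c else 1)) = (if a = a then 1 else c)
        rw [if_neg (by omega : ¬ 4 ≤ i), if_pos rfl, mul_one, mul_inv_cancel]
      · show x i * ((x i)⁻¹ * (if 4 ≤ i then c else 1)) = (if b = a then 1 else c)
        rw [if_pos hi4, if_neg (Ne.symm hab), ← mul_assoc, mul_inv_cancel, one_mul]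
end

section
/- Let n be a positive integer with n ≡ 2 (mod 4) and let T_n be the diagonal PLS of size n with triples (i, i, i) for 1 ≤ i ≤ n, using n distinct symbols. Then T_n cannot be embedded into any group of order n. (Equivalently, no group of order n ≡ 2 (mod 4) has a complete mapping, i.e. a permutation φ of G such that x ↦ x·φ(x) is also a permutation of G.) -/
lemma no_cm (n : ℕ) (hmod : n % 4 = 2) (G : Type*) [Group G] [Fintype G]
    (hcard : Fintype.card G = n) :
    ¬ ∃ φ : Equiv.Perm G, Function.Bijective fun x : G => x * φ x := by
  classical
  rintro ⟨φ, hφ⟩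
  haveI : Fact (Nat.Prime 2) := ⟨Nat.prime_two⟩
  have hdvd : 2 ∣ Fintype.card G := by rw [hcard]; omega
  obtain ⟨g, hg⟩ := exists_prime_orderOf_dvd_card 2 hdvd
  have hg1 : g ≠ 1 := by
    intro h; rw [h, orderOf_one] at hg; omega
  have hgg : g * g = 1 := by
    have := pow_orderOf_eq_one g
    rwa [hg, pow_two] at this
  set ε : G →* ℤˣ := Equiv.Perm.sign.comp (MulAction.toPermHom G G) with hεdef
  set σ : Equiv.Perm G := MulAction.toPermHom G G g with hσdef
  have hσx : ∀ x, σ x = g * x := fun x => rfl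
  have hσ2 : σ ^ 2 = 1 := by
    ext x
    simp only [Equiv.Perm.coe_one, id_eq, pow_two, Equiv.Perm.coe_mul, Function.comp_apply, hσx,
      ← mul_assoc, hgg, one_mul]
  have hσne : σ ≠ 1 := by
    intro h
    have := congrArg (fun p : Equiv.Perm G => p 1) h
    simp [hσx] at this
    exact hg1 this
  have hσord : orderOf σ = 2 := orderOf_eq_prime hσ2 hσne
  have hsupp : σ.support = Finset.univ := by
    apply Finset.eq_univ_iff_forall.2
    intro x
    rw [Equiv.Perm.mem_support, hσx]
    intro h
    exact hg1 (by simpa using mul_right_cancel (h.trans (one_mul x).symm))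
  obtain ⟨k, hk⟩ := Equiv.Perm.cycleType_prime_order (by rw [hσord]; exact Nat.prime_two)
  rw [hσord] at hk
  have hsum : σ.cycleType.sum = n := by
    rw [Equiv.Perm.sum_cycleType, hsupp, Finset.card_univ, hcard]
  have hksum : 2 * (k + 1) = n := by
    rw [hk, Multiset.sum_replicate, smul_eq_mul] at hsum
    omega
  have hsign : Equiv.Perm.sign σ = -1 := by
    rw [Equiv.Perm.sign_of_cycleType, hk]
    simp only [Multiset.sum_replicate, Multiset.card_replicate, smul_eq_mul]
    have hodd : Odd ((k + 1) * 2 + (k + 1)) := by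
      refine Even.add_odd ⟨k + 1, by ring⟩ ?_
      rcases Nat.even_or_odd (k + 1) with he | ho
      · exfalso; obtain ⟨m, hm⟩ := he; omega
      · exact ho
    exact Odd.neg_one_pow hodd
  have hεg : ε g = -1 := hsign
  -- the product of ε over G
  set P : ℤˣ := ∏ x : G, ε x with hPdef
  have hP1 : P = 1 := by
    have h1 : ∏ x : G, ε (x * φ x) = P :=
      Equiv.prod_comp (Equiv.ofBijective _ hφ) ε
    have h2 : ∏ x : G, ε (x * φ x) = P * P := by
      simp only [map_mul, Finset.prod_mul_distrib]
      congr 1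
      exact Equiv.prod_comp φ ε
    have : P * P = P := by rw [← h2, h1]
    have hsq : P * P = 1 := Int.units_mul_self P
    rw [hsq] at this; exact this.symm
  -- but also P = -1 by counting
  have hcount : (Finset.univ.filter fun x : G => ¬ ε x = 1).card =
      (Finset.univ.filter fun x : G => ε x = 1).card := by
    apply le_antisymm
    · apply Finset.card_le_card_of_injOn (fun x => g * x)
      · intro x hx
        simp only [Finset.mem_coe, Finset.mem_filter, Finset.mem_univ, true_and] at hx ⊢
        rcases Int.units_eq_one_or (ε x) with h | h
        · exact absurd h hx
        · rw [map_mul, hεg, h]; decide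
      · intro a _ b _ h
        exact mul_left_cancel h
    · apply Finset.card_le_card_of_injOn (fun x => g * x)
      · intro x hx
        simp only [Finset.mem_coe, Finset.mem_filter, Finset.mem_univ, true_and] at hx ⊢
        rw [map_mul, hεg, hx]
        decide
      · intro a _ b _ h
        exact mul_left_cancel h
  have htot : (Finset.univ.filter fun x : G => ε x = 1).card +
      (Finset.univ.filter fun x : G => ¬ ε x = 1).card = n := by
    rw [Finset.card_filter_add_card_filter_not, Finset.card_univ, hcard]
  have hneg : (Finset.univ.filter fun x : G => ¬ ε x = 1).card = k + 1 := by omega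
  have hPneg : P = -1 := by
    rw [hPdef, ← Finset.prod_filter_mul_prod_filter_not Finset.univ (fun x => ε x = 1) ε]
    rw [Finset.prod_eq_one (fun x hx => (Finset.mem_filter.1 hx).2), one_mul]
    rw [Finset.prod_congr rfl (fun x hx => ?_), Finset.prod_const, hneg]
    · have hodd : Odd (k + 1) := by
        rcases Nat.even_or_odd (k + 1) with he | ho
        · exfalso; obtain ⟨m, hm⟩ := he; omega
        · exact ho
      exact Odd.neg_one_pow hodd
    · rcases Int.units_eq_one_or (ε x) with h | h
      · exact absurd h (Finset.mem_filter.1 hx).2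
      · exact h
  rw [hP1] at hPneg
  exact absurd hPneg (by decide)

lemma embeds_to_cm (n : ℕ) (hn : 0 < n) (G : Type*) [Group G] [Fintype G]
    (hcard : Fintype.card G = n)
    (hemb : EmbedsIn ((Finset.Icc 1 n).image fun i => (i, i, i)) G) :
    ∃ φ : Equiv.Perm G, Function.Bijective fun x : G => x * φ x := by
  classical
  obtain ⟨I₁, I₂, I₃, h₁, h₂, h₃, hm⟩ := hemb
  set Q := (Finset.Icc 1 n).image fun i => (i, i, i) with hQ
  have hmemQ : ∀ i ∈ Finset.Icc 1 n, (i, i, i) ∈ Q := fun i hi =>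
    Finset.mem_image_of_mem _ hi
  have hrows : (Finset.Icc 1 n : Set ℕ) ⊆ rowsOf Q := fun i hi =>
    ⟨(i, i, i), hmemQ i hi, rfl⟩
  have hcols : (Finset.Icc 1 n : Set ℕ) ⊆ colsOf Q := fun i hi =>
    ⟨(i, i, i), hmemQ i hi, rfl⟩
  have hsyms : (Finset.Icc 1 n : Set ℕ) ⊆ symsOf Q := fun i hi =>
    ⟨(i, i, i), hmemQ i hi, rfl⟩
  haveI : Fintype {i // i ∈ Finset.Icc 1 n} := FinsetCoe.fintype _
  have hcardS : Fintype.card {i // i ∈ Finset.Icc 1 n} = Fintype.card G := by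
    rw [Fintype.card_coe, Nat.card_Icc, hcard]; omega
  have hb : ∀ (I : ℕ → G), Set.InjOn I (Finset.Icc 1 n : Set ℕ) →
      Function.Bijective (fun i : {i // i ∈ Finset.Icc 1 n} => I i) := by
    intro I hI
    rw [Fintype.bijective_iff_injective_and_card]
    refine ⟨fun a b hab => Subtype.ext (hI a.2 b.2 hab), hcardS⟩
  have hb₁ := hb I₁ (h₁.mono hrows)
  have hb₂ := hb I₂ (h₂.mono hcols)
  have hb₃ := hb I₃ (h₃.mono hsyms)
  set E₁ := Equiv.ofBijective _ hb₁
  set E₂ := Equiv.ofBijective _ hb₂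
  set E₃ := Equiv.ofBijective _ hb₃
  refine ⟨E₁.symm.trans E₂, ?_⟩
  have key : (fun x : G => x * (E₁.symm.trans E₂) x) = fun x => E₃ (E₁.symm x) := by
    funext x
    set i := E₁.symm x with hi
    have hx : x = I₁ i := (E₁.apply_symm_apply x).symm
    have hφx : (E₁.symm.trans E₂) x = I₂ i := rfl
    have htrip := hm (i.1, i.1, i.1) (hmemQ i.1 i.2)
    simp only at htrip
    rw [hφx, hx]
    exact htrip
  rw [key]
  exact (E₁.symm.trans E₃).bijective

/-- For n ≡ 2 (mod 4), the diagonal PLS `T_n` (with triples (i,i,i)) embeds in no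
group of order n; equivalently, no group of order n has a complete mapping. -/
theorem Tn_not_embeddable (n : ℕ) (hn : 0 < n) (hmod : n % 4 = 2) :
    (∀ (G : Type*) [Group G] [Fintype G], Fintype.card G = n →
      ¬ EmbedsIn ((Finset.Icc 1 n).image fun i => (i, i, i)) G) ∧
    (∀ (G : Type*) [Group G] [Fintype G], Fintype.card G = n →
      ¬ ∃ φ : Equiv.Perm G, Function.Bijective fun x : G => x * φ x) := by
  refine ⟨fun G _ _ hcard hemb => no_cm n hmod G hcard (embeds_to_cm n hn G hcard hemb),
    fun G _ _ hcard => no_cm n hmod G hcard⟩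
end
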